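/- arXiv:1103.4957 — 13 statements merged into one kernel-verified Lean document; each statement's English description precedes it below -/
import Mathlib

section
/- For every topological group G, if G satisfies property α_{1.5} at the identity, then G satisfies property α_1 at the identity. That is, for all pairwise disjoint sequences S_1, S_2, ... each converging to e, there is a set S contained in the union of the S_n, converging to e, with S_n \ S finite for every n. -/
open Filter Topology Set

/-- A countably infinite set converging to `x`: `x` is not in the set, and the set is
cofinitely contained in every neighborhood of `x`. -/
def ConvSeq {X : Type*} [TopologicalSpace X] (S : Set X) (x : X) : Prop :=
  S.Countable ∧ S.Infinite ∧ x ∉ S ∧ ∀ U ∈ nhds x, (S \ U).Finite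

/-- A set converges to `x` in the weak sense: all but finitely many of its elements
are in every neighborhood of `x`. -/
def SetConv {X : Type*} [TopologicalSpace X] (S : Set X) (x : X) : Prop :=
  ∀ U ∈ nhds x, (S \ U).Finite

/-!
Enumerate each `S n` as `ℓ n` and use the null sequence `ℓ 0` as a supply of small translations:
the term `ℓ n j` gets one copy `ℓ 0 (σ p) * ℓ n j` for every triple `p = (m, n, j)`, with `σ`
chosen greedily so that all these copies are distinct and different from `1`. The block `C m`
of copies of `S 0, …, S m` converges to `1`, and distinct blocks are disjoint. α₁.₅ yields a
convergent `T` containing almost all of `C m` for infinitely many `m`; translating the points of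
`T` back gives a set that still converges to `1` (the translations tend to `1`) and contains
almost all of each `S n`, because `S n` is copied into every block `C m` with `m ≥ n`.
-/

open Function

section SetConv

variable {ι X : Type*} [TopologicalSpace X] {x : X}

theorem setConv_image_of_tendsto {f : ι → X} {A : Set ι}
    (hf : Tendsto f (cofinite ⊓ 𝓟 A) (𝓝 x)) : SetConv (f '' A) x := by
  intro U hU
  have hbad : {i | i ∈ A ∧ f i ∉ U}.Finite := by
    simpa only [mem_map, mem_inf_principal, mem_cofinite, compl_ofPred, Classical.not_imp,
      mem_preimage] using hf hU
  refine (hbad.image f).subset ?_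
  rintro _ ⟨⟨i, hi, rfl⟩, hiU⟩
  exact ⟨i, ⟨hi, hiU⟩, rfl⟩

theorem setConv_range_of_tendsto {f : ι → X} (hf : Tendsto f cofinite (𝓝 x)) :
    SetConv (range f) x := by
  rw [← image_univ]
  exact setConv_image_of_tendsto (by rwa [principal_univ, inf_top_eq])

theorem setConv_biUnion {s : Set ι} {T : ι → Set X} (hs : s.Finite)
    (hT : ∀ i ∈ s, SetConv (T i) x) : SetConv (⋃ i ∈ s, T i) x := fun U hU => by
  simp only [iUnion_sdiff]
  exact hs.biUnion fun i hi => hT i hi U hU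

theorem SetConv.tendsto_preimage {f : ι → X} {T : Set X} (hT : SetConv T x)
    (hf : Injective f) : Tendsto f (cofinite ⊓ 𝓟 (f ⁻¹' T)) (𝓝 x) := fun U hU => by
  rw [mem_map, mem_inf_principal, mem_cofinite]
  exact ((hT U hU).preimage hf.injOn).subset fun i hi => by simpa using hi

theorem ConvSeq.exists_enumeration {S : Set X} (hS : ConvSeq S x) :
    ∃ ℓ : ℕ → X, Injective ℓ ∧ range ℓ = S ∧ Tendsto ℓ cofinite (𝓝 x) := by
  obtain ⟨hc, hi, -, hconv⟩ := hS
  have := hc.to_subtype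
  have := hi.to_subtype
  obtain ⟨_⟩ := nonempty_denumerable S
  set ℓ : ℕ → X := (↑) ∘ (Denumerable.eqv S).symm
  have hℓ : Injective ℓ := Subtype.val_injective.comp (Denumerable.eqv S).symm.injective
  have hrange : range ℓ = S := by
    simp only [ℓ, range_comp, Equiv.range_eq_univ, image_univ, Subtype.range_coe]
  refine ⟨ℓ, hℓ, hrange, fun U hU => ?_⟩
  rw [mem_map, mem_cofinite, ← preimage_compl]
  exact ((hconv U hU).preimage hℓ.injOn).subset fun j hj => ⟨hrange ▸ mem_range_self j, hj⟩

end SetConv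

section Greedy

variable {X : Type*}

noncomputable def greedyIndex (f : ℕ → ℕ → X) (x₀ : X) (p : ℕ) : ℕ :=
  sInf {i | f p i ≠ x₀ ∧ ∀ q, q < p → greedyIndex f x₀ q < i ∧ f p i ≠ f q (greedyIndex f x₀ q)}
termination_by p
decreasing_by assumption

theorem greedyIndex_spec {f : ℕ → ℕ → X} (hf : ∀ p, Injective (f p)) (x₀ : X) (p : ℕ) :
    f p (greedyIndex f x₀ p) ≠ x₀ ∧ ∀ q < p,
      greedyIndex f x₀ q < greedyIndex f x₀ p ∧
        f p (greedyIndex f x₀ p) ≠ f q (greedyIndex f x₀ q) := by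
  rw [greedyIndex.eq_1 f x₀ p]
  have hlarge : ∀ q, ∀ᶠ i in cofinite, greedyIndex f x₀ q < i := fun q =>
    Nat.cofinite_eq_atTop ▸ eventually_gt_atTop _
  have hne : ∀ y, ∀ᶠ i in cofinite, f p i ≠ y := fun y =>
    (hf p).tendsto_cofinite.eventually (eventually_cofinite_ne y)
  have hgood : ∀ᶠ i in cofinite, f p i ≠ x₀ ∧
      ∀ q ∈ Iio p, greedyIndex f x₀ q < i ∧ f p i ≠ f q (greedyIndex f x₀ q) :=
    (hne x₀).and <| (finite_Iio p).eventually_all.2 fun q _ => (hlarge q).and (hne _)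
  exact Nat.sInf_mem hgood.exists

theorem exists_injective_forall_ne {ι : Type*} [Denumerable ι] {f : ι → ℕ → X}
    (hf : ∀ p, Injective (f p)) (x₀ : X) :
    ∃ σ : ι → ℕ, Injective σ ∧ Injective (fun p => f p (σ p)) ∧ ∀ p, f p (σ p) ≠ x₀ := by
  set g := greedyIndex (fun n => f (Denumerable.ofNat ι n)) x₀
  have hg := greedyIndex_spec (fun n => hf (Denumerable.ofNat ι n)) x₀
  have hg_mono : StrictMono g := fun q p hqp => ((hg p).2 q hqp).1
  have hg_inj : Injective fun n => f (Denumerable.ofNat ι n) (g n) :=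
    .of_lt_imp_ne fun q p hqp => ((hg p).2 q hqp).2.symm
  refine ⟨g ∘ Encodable.encode, hg_mono.injective.comp Encodable.encode_injective,
    fun p p' h => Encodable.encode_injective (hg_inj ?_), fun p => ?_⟩
  · simpa only [comp_apply, Denumerable.ofNat_encode] using h
  · simpa only [comp_apply, Denumerable.ofNat_encode] using (hg (Encodable.encode p)).1

end Greedy

section ShiftedCopies

variable {G : Type*} [Group G]

def shiftedTerm (ℓ : ℕ → ℕ → G) (σ : ℕ × ℕ × ℕ → ℕ) (p : ℕ × ℕ × ℕ) : G :=
  ℓ 0 (σ p) * ℓ p.2.1 p.2.2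

def shiftedBlock (ℓ : ℕ → ℕ → G) (σ : ℕ × ℕ × ℕ → ℕ) (m : ℕ) : Set G :=
  ⋃ n ≤ m, range fun j => shiftedTerm ℓ σ (m, n, j)

def unshift (ℓ : ℕ → ℕ → G) (σ : ℕ × ℕ × ℕ → ℕ) (T : Set G) : Set G :=
  (fun p : ℕ × ℕ × ℕ => ℓ p.2.1 p.2.2) '' (shiftedTerm ℓ σ ⁻¹' T)

variable {ℓ : ℕ → ℕ → G} {σ : ℕ × ℕ × ℕ → ℕ}

theorem injective_triple_mk (m n : ℕ) : Injective fun j : ℕ => (m, n, j) :=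
  (Prod.mk_right_injective m).comp (Prod.mk_right_injective n)

theorem convSeq_shiftedBlock [TopologicalSpace G] [ContinuousMul G]
    (hℓ : ∀ n, Tendsto (ℓ n) cofinite (𝓝 1)) (hσ : Injective σ)
    (hinj : Injective (shiftedTerm ℓ σ)) (hne : ∀ p, shiftedTerm ℓ σ p ≠ 1) (m : ℕ) :
    ConvSeq (shiftedBlock ℓ σ m) 1 := by
  refine ⟨?_, ?_, ?_, setConv_biUnion (finite_Iic m) fun n _ => setConv_range_of_tendsto ?_⟩
  · exact countable_iUnion fun n => countable_iUnion fun _ => countable_range _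
  · exact (infinite_range_of_injective (hinj.comp (injective_triple_mk m 0))).mono
      (subset_iUnion₂ (s := fun n (_ : n ≤ m) => range _) 0 (Nat.zero_le m))
  · simp [shiftedBlock, hne]
  · simpa only [shiftedTerm, comp_apply, mul_one] using
      ((hℓ 0).comp (hσ.comp (injective_triple_mk m n)).tendsto_cofinite).mul (hℓ n)

theorem pairwise_disjoint_shiftedBlock (hinj : Injective (shiftedTerm ℓ σ)) :
    Pairwise (Disjoint on shiftedBlock ℓ σ) := by
  intro m m' hmm'
  rw [onFun, disjoint_left]
  rintro _ hx hx'
  simp only [shiftedBlock, mem_iUnion, mem_range] at hx hx'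
  obtain ⟨n, -, j, rfl⟩ := hx
  obtain ⟨n', -, j', h⟩ := hx'
  exact hmm' (congrArg Prod.fst (hinj h)).symm

theorem setConv_unshift [TopologicalSpace G] [IsTopologicalGroup G]
    (hℓ0 : Tendsto (ℓ 0) cofinite (𝓝 1)) (hσ : Injective σ)
    (hinj : Injective (shiftedTerm ℓ σ)) {T : Set G} (hT : SetConv T 1) :
    SetConv (unshift ℓ σ T) 1 := by
  have hshift := (hℓ0.comp hσ.tendsto_cofinite).mono_left
    (inf_le_left : cofinite ⊓ 𝓟 (shiftedTerm ℓ σ ⁻¹' T) ≤ cofinite)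
  refine setConv_image_of_tendsto ?_
  simpa only [comp_apply, shiftedTerm, inv_mul_cancel_left, inv_one, one_mul] using
    hshift.inv.mul (hT.tendsto_preimage hinj)

theorem finite_range_diff_unshift (hinj : Injective (shiftedTerm ℓ σ)) {T : Set G} {m n : ℕ}
    (hnm : n ≤ m) (hT : (shiftedBlock ℓ σ m \ T).Finite) :
    (range (ℓ n) \ unshift ℓ σ T).Finite := by
  have hbad : {j | shiftedTerm ℓ σ (m, n, j) ∉ T}.Finite :=
    (hT.preimage (hinj.comp (injective_triple_mk m n)).injOn).subset fun j hj =>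
      ⟨mem_iUnion₂.2 ⟨n, hnm, mem_range_self j⟩, hj⟩
  refine (hbad.image (ℓ n)).subset ?_
  rintro _ ⟨⟨j, rfl⟩, hj⟩
  exact ⟨j, fun hjT => hj ⟨(m, n, j), hjT, rfl⟩, rfl⟩

end ShiftedCopies

/-- For every topological group `G`, α₁.₅ at the identity implies α₁ at the identity. -/
theorem alpha_one_point_five_implies_alpha_one
    {G : Type*} [Group G] [TopologicalSpace G] [IsTopologicalGroup G]
    (h15 : ∀ S : ℕ → Set G, Pairwise (Function.onFun Disjoint S) →
      (∀ n, ConvSeq (S n) 1) →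
      ∃ T, T ⊆ ⋃ n, S n ∧ ConvSeq T 1 ∧ {n | (S n \ T).Finite}.Infinite) :
    ∀ S : ℕ → Set G, Pairwise (Function.onFun Disjoint S) →
      (∀ n, ConvSeq (S n) 1) →
      ∃ T, T ⊆ ⋃ n, S n ∧ ConvSeq T 1 ∧ ∀ n, (S n \ T).Finite := by
  intro S _ hconv
  choose ℓ hℓ_inj hℓ_range hℓ using fun n => (hconv n).exists_enumeration
  obtain ⟨σ, hσ, hinj, hne⟩ := exists_injective_forall_ne
    (f := fun (p : ℕ × ℕ × ℕ) i => ℓ 0 i * ℓ p.2.1 p.2.2)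
    (fun p => (mul_left_injective _).comp (hℓ_inj 0)) 1
  obtain ⟨T, -, hT, hT_good⟩ := h15 (shiftedBlock ℓ σ) (pairwise_disjoint_shiftedBlock hinj)
    (convSeq_shiftedBlock hℓ hσ hinj hne)
  have hcover : ∀ n, (S n \ unshift ℓ σ T).Finite := fun n => by
    obtain ⟨m, hm, hnm⟩ := hT_good.exists_gt n
    exact hℓ_range n ▸ finite_range_diff_unshift hinj hnm.le hm
  have hmem : ∀ p : ℕ × ℕ × ℕ, ℓ p.2.1 p.2.2 ∈ S p.2.1 := fun p => hℓ_range _ ▸ mem_range_self _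
  refine ⟨unshift ℓ σ T, ?_,
    ⟨(to_countable _).image _, ?_, ?_, setConv_unshift (hℓ 0) hσ hinj hT.2.2.2⟩, hcover⟩
  · rintro _ ⟨p, -, rfl⟩
    exact mem_iUnion.2 ⟨_, hmem p⟩
  · refine ((hconv 0).2.1.sdiff (hcover 0)).mono ?_
    rw [sdiff_sdiff_right_self]
    exact inter_subset_right
  · rintro ⟨p, -, hp⟩
    exact (hconv p.2.1).2.2.1 (hp ▸ hmem p)
end

section
/- Every topological space satisfying α_{1.5} satisfies α_2: given pairwise disjoint sequences S_1, S_2, ... converging to x in an α_{1.5} space, there is a sequence S ⊆ ⋃_n S_n converging to x such that S_n ∩ S is infinite for every n. -/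
open Filter Topology Set

open Function

theorem Set.Infinite.exists_pairwise_disjoint_infinite_subsets {α : Type*} {s : Set α}
    (hs : s.Infinite) :
    ∃ P : ℕ → Set α, (∀ k, P k ⊆ s) ∧ (∀ k, (P k).Infinite) ∧ Pairwise (Disjoint on P) := by
  set f : ℕ × ℕ → α := fun p => hs.natEmbedding s (Nat.pair p.1 p.2)
  have hf : f.Injective := fun p q hpq => by
    simpa [f, Nat.pair_eq_pair, Prod.ext_iff] using Subtype.val_injective hpq
  refine ⟨fun k => range fun m => f (k, m), ?_, fun k => ?_, fun k l hkl => ?_⟩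
  · rintro k _ ⟨m, rfl⟩
    exact Subtype.property _
  · exact infinite_range_of_injective fun m m' h => by simpa using hf h
  · refine disjoint_range_iff.mpr fun m m' h => hkl ?_
    simpa using congrArg Prod.fst (hf h)

theorem pairwise_disjoint_uncurry {ι κ α : Type*} {S : ι → Set α} {P : ι → κ → Set α}
    (hS : Pairwise (Disjoint on S)) (hPS : ∀ i k, P i k ⊆ S i)
    (hP : ∀ i, Pairwise (Disjoint on P i)) :
    Pairwise (Disjoint on uncurry P) := by
  rintro ⟨i, k⟩ ⟨j, l⟩ hne
  rcases eq_or_ne i j with rfl | hij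
  · exact hP i fun hkl => hne (congrArg (Prod.mk i) hkl)
  · exact (hS hij).mono (hPS i k) (hPS j l)

theorem pairwise_disjoint_biUnion_of_uncurry {ι κ α : Type*} {P : ι → κ → Set α}
    (hP : Pairwise (Disjoint on uncurry P)) (I : κ → Set ι) :
    Pairwise (Disjoint on fun k => ⋃ i ∈ I k, P i k) := fun k l hkl =>
  disjoint_iUnion₂_left.mpr fun i _ => disjoint_iUnion₂_right.mpr fun j _ =>
    @hP (i, k) (j, l) fun h => hkl (congrArg Prod.snd h)

section ConvSeq

variable {X : Type*} [TopologicalSpace X] {x : X}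

theorem ConvSeq.subset {S T : Set X} (hS : ConvSeq S x) (hTS : T ⊆ S) (hT : T.Infinite) :
    ConvSeq T x :=
  ⟨hS.1.mono hTS, hT, fun hx => hS.2.2.1 (hTS hx),
    fun U hU => (hS.2.2.2 U hU).subset (sdiff_subset_sdiff_left hTS)⟩

theorem ConvSeq.biUnion {ι : Type*} {I : Set ι} {S : ι → Set X} (hI : I.Finite)
    (hne : I.Nonempty) (hS : ∀ i ∈ I, ConvSeq (S i) x) : ConvSeq (⋃ i ∈ I, S i) x := by
  obtain ⟨i₀, hi₀⟩ := hne
  refine ⟨hI.countable.biUnion fun i hi => (hS i hi).1,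
    (hS i₀ hi₀).2.1.mono (subset_biUnion_of_mem hi₀), ?_, fun U hU => ?_⟩
  · simp only [mem_iUnion, not_exists]
    exact fun i hi => (hS i hi).2.2.1
  · simp only [iUnion_sdiff]
    exact hI.biUnion fun i hi => (hS i hi).2.2.2 U hU

end ConvSeq

/-- Every α₁.₅ topological space is α₂. -/
theorem alpha_one_point_five_implies_alpha_two {X : Type*} [TopologicalSpace X]
    (h15 : ∀ (x : X) (S : ℕ → Set X), Pairwise (Function.onFun Disjoint S) →
      (∀ n, ConvSeq (S n) x) →
      ∃ T, T ⊆ ⋃ n, S n ∧ ConvSeq T x ∧ {n | (S n \ T).Finite}.Infinite) :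
    ∀ (x : X) (S : ℕ → Set X), Pairwise (Function.onFun Disjoint S) →
      (∀ n, ConvSeq (S n) x) →
      ∃ T, T ⊆ ⋃ n, S n ∧ ConvSeq T x ∧ ∀ n, (S n ∩ T).Infinite := by
  intro x S hdisj hconv
  choose P hPS hPinf hPdisj using fun n => (hconv n).2.1.exists_pairwise_disjoint_infinite_subsets
  set R : ℕ → Set X := fun k => ⋃ n ∈ Iic k, P n k
  have hR_disj : Pairwise (Disjoint on R) :=
    pairwise_disjoint_biUnion_of_uncurry (pairwise_disjoint_uncurry hdisj hPS hPdisj) Iic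
  have hR_conv : ∀ k, ConvSeq (R k) x := fun k =>
    ConvSeq.biUnion (finite_Iic k) nonempty_Iic fun n _ => (hconv n).subset (hPS n k) (hPinf n k)
  obtain ⟨T, hTR, hT, hRT⟩ := h15 x R hR_disj hR_conv
  refine ⟨T, hTR.trans (iUnion_subset fun k => iUnion₂_subset fun n _ =>
    (hPS n k).trans (subset_iUnion S n)), hT, fun n => ?_⟩
  obtain ⟨k, hk, hnk⟩ := hRT.exists_gt n
  have hPR : P n k ⊆ R k := subset_biUnion_of_mem (u := fun n => P n k) (mem_Iic.mpr hnk.le)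
  have hPT : (P n k \ T).Finite := hk.subset (sdiff_subset_sdiff_left hPR)
  exact ((hPinf n k).inter_of_finite_sdiff hPT).mono (inter_subset_inter_left T (hPS n k))
end

section
/- A topological group G is Ramsey if and only if it is locally Ramsey at the identity: whenever lim_m g_{nm} = e for all n, there is an infinite I ⊆ ℕ such that the set {g_{nm} : n, m ∈ I, n < m} converges to e. -/
open Filter Topology Set

/-- A topological space is Ramsey if whenever `lim_n lim_m x n m = a`, there is an infinite
`I ⊆ ℕ` such that for each neighborhood `U` of `a` there is `k` with
`{x n m : k < n < m, n, m ∈ I} ⊆ U`. -/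
def RamseySpace (X : Type*) [TopologicalSpace X] : Prop :=
  ∀ (x : ℕ → ℕ → X) (y : ℕ → X) (a : X),
    (∀ n, Tendsto (x n) atTop (nhds (y n))) → Tendsto y atTop (nhds a) →
    ∃ I : Set ℕ, I.Infinite ∧
      ∀ U ∈ nhds a, ∃ k, ∀ n ∈ I, ∀ m ∈ I, k < n → n < m → x n m ∈ U

/-!
If `g n m → 1` for every `n` and `{g n m : n < m in I}` converges to `1`, thin out `I`
diagonally: when choosing the next index `q`, make `g p q` avoid, for each earlier index `p`,
the finitely many values of `g` on `[0, p)²` that some neighbourhood of `1` misses. Then a value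
outside a neighbourhood `U` of `1` (there are finitely many in the set, all seen below some `k`)
can only occur as `g p q` with `p ≤ k`, which is the tail convergence required by `RamseySpace`.
A general double limit `lim_n lim_m x n m = a` reduces to this case by translating row `n`
by `(y n)⁻¹`.
-/

section PairConvergence

variable {X : Type*} [TopologicalSpace X]

def pairValues (g : ℕ → ℕ → X) (I : Set ℕ) : Set X :=
  {z | ∃ n ∈ I, ∃ m ∈ I, n < m ∧ z = g n m}

def TendstoAlongPairs (g : ℕ → ℕ → X) (I : Set ℕ) (a : X) : Prop :=
  ∀ U ∈ 𝓝 a, ∃ k, ∀ n ∈ I, ∀ m ∈ I, k < n → n < m → g n m ∈ U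

theorem setConv_pairValues_of_tendstoAlongPairs {g : ℕ → ℕ → X} {I : Set ℕ} {a : X}
    (hrow : ∀ n, Tendsto (g n) atTop (𝓝 a)) (h : TendstoAlongPairs g I a) :
    SetConv (pairValues g I) a := by
  intro U hU
  obtain ⟨k, hk⟩ := h U hU
  have hrow_fin : ∀ n, (g n ⁻¹' U)ᶜ.Finite := fun n =>
    mem_cofinite.1 (Nat.cofinite_eq_atTop ▸ hrow n hU)
  refine ((finite_Iic k).biUnion fun n _ => (hrow_fin n).image (g n)).subset ?_
  rintro _ ⟨⟨n, hn, m, hm, hnm, rfl⟩, hout⟩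
  have hnk : n ≤ k := not_lt.1 fun hkn => hout (hk n hn m hm hkn hnm)
  exact mem_biUnion hnk ⟨m, hout, rfl⟩

theorem exists_tendstoAlongPairs_of_setConv {g : ℕ → ℕ → X} {I : Set ℕ} {a : X}
    (hI : I.Infinite) (hrow : ∀ n, Tendsto (g n) atTop (𝓝 a))
    (hconv : SetConv (pairValues g I) a) :
    ∃ J ⊆ I, J.Infinite ∧ TendstoAlongPairs g J a := by
  set B : ℕ → Set X := fun p => Function.uncurry g '' (Iio p ×ˢ Iio p) ∩ {z | {z}ᶜ ∈ 𝓝 a}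
  have hB : ∀ p, (B p)ᶜ ∈ 𝓝 a := fun p => by
    have hfin : (B p).Finite := (((finite_Iio p).prod (finite_Iio p)).image _).inter_of_left _
    filter_upwards [hfin.eventually_all.2 fun z hz => hz.2] with x hx hxB using hx x hxB rfl
  have hstep : ∀ s : Finset ℕ, (∀ p ∈ s, p ∈ I) → ∃ q ∈ I, ∀ p ∈ s, p < q ∧ g p q ∉ B p := by
    intro s _
    have hev : ∀ᶠ q in atTop, ∀ p ∈ s, p < q ∧ g p q ∉ B p :=
      s.eventually_all.2 fun p _ => (eventually_gt_atTop p).and (hrow p (hB p))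
    obtain ⟨q, hq, hqI⟩ := (hev.and_frequently (Nat.frequently_atTop_iff_infinite.2 hI)).exists
    exact ⟨q, hqI, hq⟩
  obtain ⟨f, hfI, hf⟩ :=
    exists_seq_of_forall_finset_exists (· ∈ I) (fun p q => p < q ∧ g p q ∉ B p) hstep
  have hmono : StrictMono f := fun _ _ h => (hf _ _ h).1
  refine ⟨range f, range_subset_iff.2 hfI, infinite_range_of_injective hmono.injective, ?_⟩
  intro U hU
  have hbad : ∀ᶠ p in atTop, pairValues g I \ U ⊆ B p := by
    refine (hconv U hU).eventually_all.2 ?_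
    rintro _ ⟨⟨n, -, m, -, -, rfl⟩, hout⟩
    filter_upwards [eventually_gt_atTop (max n m)] with p hp
    refine ⟨⟨(n, m), ⟨?_, ?_⟩, rfl⟩, mem_of_superset hU fun z hz hzg => hout (hzg ▸ hz)⟩ <;>
      simp only [mem_Iio] <;> omega
  obtain ⟨k, hk⟩ := eventually_atTop.1 hbad
  refine ⟨k, ?_⟩
  rintro _ ⟨s, rfl⟩ _ ⟨t, rfl⟩ hks hst
  by_contra hout
  exact (hf s t (hmono.lt_iff_lt.1 hst)).2 (hk _ hks.le ⟨⟨_, hfI s, _, hfI t, hst, rfl⟩, hout⟩)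

theorem TendstoAlongPairs.mul_left [Mul X] [ContinuousMul X] {g : ℕ → ℕ → X}
    {y : ℕ → X} {I : Set ℕ} {a b : X} (hy : Tendsto y atTop (𝓝 a))
    (h : TendstoAlongPairs g I b) : TendstoAlongPairs (fun n m => y n * g n m) I (a * b) := by
  intro U hU
  obtain ⟨W, hW, V, hV, hWV⟩ := mem_nhds_prod_iff.1 (continuous_mul.tendsto (a, b) hU)
  obtain ⟨N, hN⟩ := eventually_atTop.1 (hy hW)
  obtain ⟨k, hk⟩ := h V hV
  refine ⟨max k N, fun n hn m hm hkn hnm =>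
    hWV (mk_mem_prod (hN n ?_) (hk n hn m hm ?_ hnm))⟩ <;> omega

end PairConvergence

/-- A topological group is Ramsey if and only if it is locally Ramsey at the identity. -/
theorem ramsey_iff_locally_ramsey_at_identity
    {G : Type*} [Group G] [TopologicalSpace G] [IsTopologicalGroup G] :
    RamseySpace G ↔
      ∀ g : ℕ → ℕ → G, (∀ n, Tendsto (g n) atTop (nhds (1 : G))) →
        ∃ I : Set ℕ, I.Infinite ∧
          SetConv {z | ∃ n ∈ I, ∃ m ∈ I, n < m ∧ z = g n m} (1 : G) := by
  constructor
  · intro hR g hg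
    obtain ⟨I, hI, hpairs⟩ := hR g (fun _ => 1) 1 hg tendsto_const_nhds
    exact ⟨I, hI, setConv_pairValues_of_tendstoAlongPairs hg hpairs⟩
  · intro h x y a hx hy
    have hrow : ∀ n, Tendsto (fun m => (y n)⁻¹ * x n m) atTop (𝓝 1) := fun n => by
      simpa using (hx n).const_mul (y n)⁻¹
    obtain ⟨I, hI, hconv⟩ := h _ hrow
    obtain ⟨J, -, hJ, hpairs⟩ := exists_tendstoAlongPairs_of_setConv hI hrow hconv
    have hx_pairs := hpairs.mul_left hy
    simp only [mul_inv_cancel_left, mul_one] at hx_pairs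
    exact ⟨J, hJ, hx_pairs⟩
end

section
/- Every α_{2^-} topological space is locally Ramsey: if for each n, lim_m x_{nm} = x, then there is an infinite I ⊆ ℕ with {x_{nm} : n, m ∈ I, n < m} converging to x. -/
/-!
Apply α₂⁻ to get `m` such that the blocks `{a j (m n) | j ≤ n}` converge to `x`, then thin out
to indices `f 0 < f 1 < ⋯` with `m (f k) ≤ f (k + 1)` and take `I = {m (f k)}`. For `i < j`
the pair `a (m (f i)) (m (f j))` lies in the block at `n = f j`, because
`m (f i) ≤ f (i + 1) ≤ f j`; so the Ramsey set of `I` is contained in the α₂⁻ set.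
-/

open Filter Topology Set

theorem SetConv.mono {X : Type*} [TopologicalSpace X] {S T : Set X} {x : X}
    (hT : SetConv T x) (hST : S ⊆ T) : SetConv S x :=
  fun U hU => (hT U hU).subset (sdiff_subset_sdiff_left hST)

theorem Nat.exists_strictMono_map_le_succ (m : ℕ → ℕ) :
    ∃ f : ℕ → ℕ, StrictMono f ∧ ∀ k, m (f k) ≤ f (k + 1) := by
  let f : ℕ → ℕ := fun k => Nat.rec 0 (fun _ fk => max (m fk) (fk + 1)) k
  refine ⟨f, strictMono_nat_of_lt_succ fun k => ?_, fun k => le_max_left _ _⟩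
  exact (Nat.lt_succ_self _).trans_le (le_max_right _ _)

theorem pairs_subset_diagonal_blocks {X : Type*} (a : ℕ → ℕ → X) {m f : ℕ → ℕ}
    (hm : Monotone m) (hf : Monotone f) (hmf : ∀ k, m (f k) ≤ f (k + 1)) :
    {z | ∃ n ∈ range (m ∘ f), ∃ p ∈ range (m ∘ f), n < p ∧ z = a n p} ⊆
      {z | ∃ n, ∃ j ≤ n, z = a j (m n)} := by
  rintro _ ⟨_, ⟨i, rfl⟩, _, ⟨j, rfl⟩, hlt, rfl⟩
  have hij : i < j := (hm.comp hf).reflect_lt hlt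
  exact ⟨f j, m (f i), (hmf i).trans (hf hij), rfl⟩

/-- Every α₂⁻ topological space is locally Ramsey. -/
theorem alpha_two_minus_implies_locally_ramsey {X : Type*} [TopologicalSpace X]
    (h2m : ∀ (x : X) (a : ℕ → ℕ → X), (∀ n, Tendsto (a n) atTop (nhds x)) →
      ∃ m : ℕ → ℕ, StrictMono m ∧
        SetConv {z | ∃ n, ∃ j ≤ n, z = a j (m n)} x) :
    ∀ (x : X) (a : ℕ → ℕ → X), (∀ n, Tendsto (a n) atTop (nhds x)) →
      ∃ I : Set ℕ, I.Infinite ∧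
        SetConv {z | ∃ n ∈ I, ∃ m ∈ I, n < m ∧ z = a n m} x := by
  intro x a ha
  obtain ⟨m, hm, hblocks⟩ := h2m x a ha
  obtain ⟨f, hf, hmf⟩ := Nat.exists_strictMono_map_le_succ m
  refine ⟨range (m ∘ f), infinite_range_of_injective (hm.comp hf).injective, ?_⟩
  exact hblocks.mono (pairs_subset_diagonal_blocks a hm.monotone hf.monotone hmf)
end

section
/- Every locally Ramsey topological space is α_{3^-}, and every α_{3^-} space is α_3. -/
open Filter Topology Set

def LocallyRamsey (X : Type*) [TopologicalSpace X] : Prop :=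
  ∀ (x : X) (a : ℕ → ℕ → X), (∀ n, Tendsto (a n) atTop (nhds x)) →
    ∃ I : Set ℕ, I.Infinite ∧
      SetConv {z | ∃ n ∈ I, ∃ m ∈ I, n < m ∧ z = a n m} x

def AlphaThreeMinus (X : Type*) [TopologicalSpace X] : Prop :=
  ∀ (x : X) (a : ℕ → ℕ → X), (∀ n, Tendsto (a n) atTop (nhds x)) →
    ∃ I J : Set ℕ, I.Infinite ∧ J.Infinite ∧
      SetConv {z | ∃ n ∈ I, ∃ m ∈ J, n < m ∧ z = a n m} x

def AlphaThree (X : Type*) [TopologicalSpace X] : Prop :=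
  ∀ (x : X) (S : ℕ → Set X), Pairwise (Function.onFun Disjoint S) →
    (∀ n, ConvSeq (S n) x) →
    ∃ T, T ⊆ ⋃ n, S n ∧ ConvSeq T x ∧ {n | (S n ∩ T).Infinite}.Infinite

/-! A locally Ramsey space is α₃⁻ with `J = I`. For α₃ one enumerates the sequences `S n`
injectively as rows `a n` of a double sequence; α₃⁻ yields infinite `I`, `J` such that
`{a n m | n ∈ I, m ∈ J, n < m}` converges to `x`, and this set meets every `S n` with `n ∈ I`
in the infinitely many points `a n m`, `m ∈ J`, `m > n`. -/

theorem LocallyRamsey.alphaThreeMinus {X : Type*} [TopologicalSpace X]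
    (h : LocallyRamsey X) : AlphaThreeMinus X := fun x a ha =>
  let ⟨I, hI, hconv⟩ := h x a ha
  ⟨I, I, hI, hI, hconv⟩

theorem infinite_inter_setOf_row {X : Type*} {S : Set X} {a : ℕ → ℕ → X} {I J : Set ℕ} {n : ℕ}
    (hn : n ∈ I) (hJ : J.Infinite) (hinj : (a n).Injective) (hmem : ∀ m, a n m ∈ S) :
    (S ∩ {z | ∃ n ∈ I, ∃ m ∈ J, n < m ∧ z = a n m}).Infinite := by
  refine ((hJ.sdiff (finite_Iic n)).image hinj.injOn).mono ?_
  rintro z ⟨m, ⟨hmJ, hm⟩, rfl⟩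
  exact ⟨hmem m, n, hn, m, hmJ, not_le.mp hm, rfl⟩

section

variable {X : Type*} [TopologicalSpace X]

theorem SetConv.tendsto_cofinite {α : Type*} {S : Set X} {x : X} {a : α → X}
    (hS : SetConv S x) (hinj : a.Injective) (hmem : ∀ i, a i ∈ S) :
    Tendsto a cofinite (𝓝 x) := fun U hU =>
  ((hS U hU).preimage hinj.injOn).subset fun i hi => ⟨hmem i, hi⟩

theorem ConvSeq.exists_injective_tendsto {S : Set X} {x : X} (h : ConvSeq S x) :
    ∃ a : ℕ → X, a.Injective ∧ (∀ m, a m ∈ S) ∧ Tendsto a atTop (𝓝 x) := by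
  obtain ⟨-, hinf, -, hconv⟩ := h
  have := hinf.to_subtype
  let e := Infinite.natEmbedding S
  have hinj : (fun m => (e m : X)).Injective := Subtype.val_injective.comp e.injective
  refine ⟨fun m => e m, hinj, fun m => (e m).2, ?_⟩
  rw [← Nat.cofinite_eq_atTop]
  exact SetConv.tendsto_cofinite hconv hinj fun m => (e m).2

theorem AlphaThreeMinus.alphaThree (h : AlphaThreeMinus X) : AlphaThree X := by
  intro x S _ hS
  choose a hinj hmem htendsto using fun n => (hS n).exists_injective_tendsto
  obtain ⟨I, J, hI, hJ, hconv⟩ := h x a htendsto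
  set T := {z | ∃ n ∈ I, ∃ m ∈ J, n < m ∧ z = a n m}
  have hTsub : T ⊆ ⋃ n, S n := by
    rintro z ⟨n, -, m, -, -, rfl⟩
    exact mem_iUnion_of_mem n (hmem n m)
  have hrow : ∀ n ∈ I, (S n ∩ T).Infinite := fun n hn =>
    infinite_inter_setOf_row hn hJ (hinj n) (hmem n)
  have hxT : x ∉ T := by
    rintro ⟨n, -, m, -, -, hx⟩
    exact (hS n).2.2.1 (hx ▸ hmem n m)
  obtain ⟨n₀, hn₀⟩ := hI.nonempty
  refine ⟨T, hTsub, ⟨?_, (hrow n₀ hn₀).mono inter_subset_right, hxT, hconv⟩, ?_⟩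
  · exact (countable_iUnion fun n => (hS n).1).mono hTsub
  · exact hI.mono hrow

end

/-- Every locally Ramsey space is α₃⁻, and every α₃⁻ space is α₃. -/
theorem locallyRamsey_implies_alpha3minus_and_alpha3minus_implies_alpha3
    (X : Type*) [TopologicalSpace X] :
    (LocallyRamsey X → AlphaThreeMinus X) ∧ (AlphaThreeMinus X → AlphaThree X) :=
  ⟨LocallyRamsey.alphaThreeMinus, AlphaThreeMinus.alphaThree⟩
end

section
/- For a Tychonoff space X, if C_p(X) (the space of continuous real-valued functions on X with the topology of pointwise convergence) satisfies α_4 at the zero function, then it satisfies α_{2^-} at the zero function: given for each n a sequence (f_{nm})_m of continuous functions converging pointwise to 0, there are indices m_1 < m_2 < ... such that ⋃_n {f_{1 m_n}, ..., f_{n m_n}} converges to 0 in C_p(X). -/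
/-!
Scheepers' trick: the sums `g n m = ∑_{j ≤ n} |f j m|` still converge to `0` as `m → ∞`, and
`g n m` dominates `f 1 m, …, f n m` pointwise. Apply α₄ to the sequences `(g n m)_{m ≥ n}`,
made pairwise distinct and nonzero by adding tiny positive constants; thin out the resulting
convergent selection `g n_k m_k` so that `m_k` increases. Since neighbourhoods of `0` in
`C_p(X)` are solid, domination transfers the convergence to `⋃_k {f j m_k : j ≤ k}`.
-/

open Filter Topology Set

/-- `C_p(X)`: continuous real-valued functions on `X` with the topology of pointwise
convergence (inherited from the product topology on `X → ℝ`). -/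
abbrev Cp (X : Type*) [TopologicalSpace X] : Type _ := {f : X → ℝ // Continuous f}

/-- The zero function of `C_p(X)`. -/
def cpZero (X : Type*) [TopologicalSpace X] : Cp X := ⟨fun _ => 0, continuous_const⟩

open Function

-- The chosen points lie in the pairwise distinct cosets `ℚ + k √2`, `k ∈ ℕ`.
theorem exists_injective_mem_Ioo {ι : Type*} [Countable ι] (a b : ι → ℝ)
    (hab : ∀ i, a i < b i) :
    ∃ c : ι → ℝ, Injective c ∧ ∀ i, c i ∈ Ioo (a i) (b i) := by
  obtain ⟨k, hk⟩ := Countable.exists_injective_nat ι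
  have hq : ∀ i, ∃ q : ℚ, a i - k i * √2 < q ∧ (q : ℝ) < b i - k i * √2 := fun i =>
    exists_rat_btwn (by linarith [hab i])
  choose q hq using hq
  refine ⟨fun i => q i + k i * √2, fun i j hij => hk ?_,
    fun i => ⟨by linarith [hq i], by linarith [hq i]⟩⟩
  by_contra hne
  have hirr : Irrational (((k i : ℤ) - k j : ℤ) * √2) :=
    irrational_sqrt_two.intCast_mul (sub_ne_zero.2 (by exact_mod_cast hne))
  exact hirr.ne_rat (q j - q i) (by push_cast; linarith)

section

variable {X : Type*} [TopologicalSpace X]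

theorem convSeq_range {x : X} {u : ℕ → X} (hu : Injective u) (hx : ∀ n, u n ≠ x)
    (hlim : Tendsto u atTop (𝓝 x)) : ConvSeq (range u) x := by
  refine ⟨countable_range u, infinite_range_of_injective hu, fun ⟨n, hn⟩ => hx n hn,
    fun U hU => ?_⟩
  refine ((Nat.cofinite_eq_atTop ▸ hlim) hU).image u |>.subset ?_
  rintro _ ⟨⟨n, rfl⟩, hn⟩
  exact mem_image_of_mem u hn

theorem setConv_range {ι : Type*} {x : X} {u : ι → X} (hlim : Tendsto u cofinite (𝓝 x)) :
    SetConv (range u) x := by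
  intro U hU
  refine (hlim hU).image u |>.subset ?_
  rintro _ ⟨⟨i, rfl⟩, hi⟩
  exact mem_image_of_mem u hi

theorem SetConv.tendsto_cofinite_s8 {ι : Type*} {T : Set X} {x : X} (hT : SetConv T x) {u : ι → X}
    (hu : Injective u) (huT : ∀ i, u i ∈ T) : Tendsto u cofinite (𝓝 x) := fun U hU =>
  (hT U hU).preimage hu.injOn |>.subset fun i hi => ⟨huT i, hi⟩

namespace Cp

theorem tendsto_iff {ι : Type*} {l : Filter ι} {u : ι → Cp X} {v : Cp X} :
    Tendsto u l (𝓝 v) ↔ ∀ x, Tendsto (fun i => (u i).1 x) l (𝓝 (v.1 x)) := by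
  rw [IsEmbedding.subtypeVal.isInducing.tendsto_nhds_iff]
  exact tendsto_pi_nhds

theorem tendsto_zero_of_abs_le {ι : Type*} {l : Filter ι} {u v : ι → Cp X}
    (hv : Tendsto v l (𝓝 (cpZero X))) (huv : ∀ i x, |(u i).1 x| ≤ (v i).1 x) :
    Tendsto u l (𝓝 (cpZero X)) :=
  tendsto_iff.2 fun x => squeeze_zero_norm (fun i => huv i x) (tendsto_iff.1 hv x)

theorem setConv_of_abs_le {g : ℕ → ℕ → Cp X} {τ : ℕ → Cp X}
    (hτ : Tendsto τ cofinite (𝓝 (cpZero X)))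
    (hgτ : ∀ k j x, j ≤ k → |(g j k).1 x| ≤ (τ k).1 x) :
    SetConv {z | ∃ k, ∃ j ≤ k, z = g j k} (cpZero X) := by
  have hfst : Tendsto (fun p : {p : ℕ × ℕ // p.2 ≤ p.1} => p.1.1) cofinite cofinite :=
    Tendsto.cofinite_of_finite_preimage_singleton fun k =>
      (((finite_singleton k).prod (finite_Iic k)).preimage Subtype.val_injective.injOn).subset
        (fun p (hp : p.1.1 = k) => ⟨hp, hp ▸ p.2⟩) |>.to_subtype
  have hrange : {z | ∃ k, ∃ j ≤ k, z = g j k} =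
      range fun p : {p : ℕ × ℕ // p.2 ≤ p.1} => g p.1.2 p.1.1 := by
    ext z
    constructor
    · rintro ⟨k, j, hj, rfl⟩; exact ⟨⟨(k, j), hj⟩, rfl⟩
    · rintro ⟨⟨⟨k, j⟩, hj⟩, rfl⟩; exact ⟨k, j, hj, rfl⟩
  rw [hrange]
  exact setConv_range (tendsto_zero_of_abs_le (hτ.comp hfst) fun p x => hgτ _ _ x p.2)

end Cp

def scheepersSum (f : ℕ → ℕ → Cp X) (n m : ℕ) (δ : ℝ) : Cp X :=
  ⟨fun x => δ + ∑ j ∈ Finset.range (n + 1), |(f j m).1 x|,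
    continuous_const.add (continuous_finsetSum _ fun j _ => (f j m).2.abs)⟩

variable (f : ℕ → ℕ → Cp X)

theorem scheepersSum_apply (n m : ℕ) (δ : ℝ) (x : X) :
    (scheepersSum f n m δ).1 x = δ + ∑ j ∈ Finset.range (n + 1), |(f j m).1 x| := rfl

theorem abs_le_scheepersSum {n m j : ℕ} {δ : ℝ} (hj : j ≤ n) (hδ : 0 ≤ δ) (x : X) :
    |(f j m).1 x| ≤ (scheepersSum f n m δ).1 x := by
  rw [scheepersSum_apply]
  have := Finset.single_le_sum (f := fun j => |(f j m).1 x|) (fun _ _ => abs_nonneg _)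
    (Finset.mem_range_succ_iff.2 hj)
  linarith

theorem scheepersSum_pos {n m : ℕ} {δ : ℝ} (hδ : 0 < δ) (x : X) :
    0 < (scheepersSum f n m δ).1 x :=
  add_pos_of_pos_of_nonneg hδ (Finset.sum_nonneg fun _ _ => abs_nonneg _)

theorem tendsto_scheepersSum (hf : ∀ n, Tendsto (f n) atTop (𝓝 (cpZero X))) (n : ℕ)
    {δ : ℕ → ℝ} (hδ : Tendsto δ atTop (𝓝 0)) :
    Tendsto (fun m => scheepersSum f n m (δ m)) atTop (𝓝 (cpZero X)) := by
  refine Cp.tendsto_iff.2 fun x => ?_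
  have hsum := tendsto_finsetSum (Finset.range (n + 1)) fun j _ =>
    (Cp.tendsto_iff.1 (hf j) x).abs
  simpa [scheepersSum_apply, cpZero] using hδ.add hsum

theorem exists_dominating_family [Nonempty X] (hf : ∀ n, Tendsto (f n) atTop (𝓝 (cpZero X))) :
    ∃ H : ℕ → ℕ → Cp X, Injective2 H ∧ (∀ n m, H n m ≠ cpZero X) ∧
      (∀ n, Tendsto (H n) atTop (𝓝 (cpZero X))) ∧
      ∀ n m j x, j ≤ n → |(f j m).1 x| ≤ (H n m).1 x := by
  obtain ⟨x₀⟩ := ‹Nonempty X›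
  set a : ℕ × ℕ → ℝ := fun p => (scheepersSum f p.1 p.2 0).1 x₀
  obtain ⟨c, hc, hca⟩ := exists_injective_mem_Ioo a (fun p => a p + 1 / (p.2 + 1))
    fun p => by simp only [lt_add_iff_pos_right]; positivity
  set δ : ℕ → ℕ → ℝ := fun n m => c (n, m) - a (n, m)
  have hδ : ∀ n m, 0 < δ n m ∧ δ n m < 1 / (m + 1) := fun n m => by
    have := hca (n, m); constructor <;> simp only [δ] <;> linarith [this.1, this.2]
  -- distinct values at `x₀` make the functions pairwise distinct
  have hx₀ : ∀ n m, (scheepersSum f n m (δ n m)).1 x₀ = c (n, m) := fun n m => by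
    simp only [scheepersSum_apply, δ, a]; ring
  refine ⟨fun n m => scheepersSum f n m (δ n m), fun n n' m m' h => ?_, fun n m h => ?_,
    fun n => tendsto_scheepersSum f hf n ?_,
    fun n m j x hj => abs_le_scheepersSum f hj (hδ n m).1.le x⟩
  · exact Prod.mk.inj (hc ((hx₀ n m).symm.trans ((congrArg (·.1 x₀) h).trans (hx₀ n' m'))))
  · exact (scheepersSum_pos f (hδ n m).1 x₀).ne' (congrArg (·.1 x₀) h)
  · exact squeeze_zero (fun m => (hδ n m).1.le) (fun m => (hδ n m).2.le)
      tendsto_one_div_add_atTop_nhds_zero_nat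

end

theorem exists_strictMono_diagonal {P : ℕ → ℕ → Prop}
    (h : {n | ∃ m ≥ n, P n m}.Infinite) :
    ∃ ν μ : ℕ → ℕ, StrictMono ν ∧ StrictMono μ ∧ ∀ k, P (ν k) (μ k) := by
  obtain ⟨φ, hφ, hφP⟩ :=
    extraction_of_frequently_atTop (Nat.frequently_atTop_iff_infinite.2 h)
  choose μ hμ hμP using hφP
  obtain ⟨ψ, hψ, hμψ⟩ := strictMono_subseq_of_id_le fun k => (hφ.id_le k).trans (hμ k)
  exact ⟨φ ∘ ψ, μ ∘ ψ, hφ.comp hψ, hμψ, fun k => hμP (ψ k)⟩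

theorem cp_alpha4_implies_alpha2minus_general {X : Type*} [TopologicalSpace X]
    (h4 : ∀ S : ℕ → Set (Cp X), Pairwise (Function.onFun Disjoint S) →
      (∀ n, ConvSeq (S n) (cpZero X)) →
      ∃ T, T ⊆ ⋃ n, S n ∧ ConvSeq T (cpZero X) ∧ {n | (S n ∩ T).Nonempty}.Infinite)
    (f : ℕ → ℕ → Cp X) (hf : ∀ n, Tendsto (f n) atTop (nhds (cpZero X))) :
    ∃ m : ℕ → ℕ, StrictMono m ∧
      SetConv {z | ∃ n, ∃ j ≤ n, z = f j (m n)} (cpZero X) := by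
  rcases isEmpty_or_nonempty X with _ | _
  · exact ⟨id, strictMono_id, fun U _ => Set.toFinite _⟩
  obtain ⟨H, hHinj, hH0, hHlim, hfH⟩ := exists_dominating_family f hf
  set S : ℕ → Set (Cp X) := fun n => range fun m => H n (m + n)
  have hSdisj : Pairwise (Disjoint on S) := fun n n' hne => disjoint_left.2 <| by
    rintro _ ⟨m, rfl⟩ ⟨m', h⟩
    exact hne (hHinj h).1.symm
  have hSconv : ∀ n, ConvSeq (S n) (cpZero X) := fun n =>
    convSeq_range (fun m m' h => by simpa using (hHinj h).2) (fun m => hH0 n _)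
      ((hHlim n).comp (tendsto_add_atTop_nat n))
  obtain ⟨T, -, ⟨-, -, -, hT⟩, hI⟩ := h4 S hSdisj hSconv
  obtain ⟨ν, μ, hν, hμ, hνμ⟩ := exists_strictMono_diagonal (P := fun n m => H n m ∈ T)
    (hI.mono <| by rintro n ⟨_, ⟨m, rfl⟩, hm⟩; exact ⟨m + n, n.le_add_left m, hm⟩)
  refine ⟨μ, hμ, Cp.setConv_of_abs_le (τ := fun k => H (ν k) (μ k))
    (SetConv.tendsto_cofinite_s8 hT (fun k k' h => hν.injective (hHinj h).1) hνμ) ?_⟩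
  exact fun k j x hj => hfH _ _ _ _ (hj.trans (hν.id_le k))

/-- For a Tychonoff space `X`, if `C_p(X)` is α₄ at `0` then it is α₂⁻ at `0`. -/
theorem cp_alpha4_implies_alpha2minus {X : Type*} [TopologicalSpace X] [T35Space X]
    (h4 : ∀ S : ℕ → Set (Cp X), Pairwise (Function.onFun Disjoint S) →
      (∀ n, ConvSeq (S n) (cpZero X)) →
      ∃ T, T ⊆ ⋃ n, S n ∧ ConvSeq T (cpZero X) ∧ {n | (S n ∩ T).Nonempty}.Infinite)
    (f : ℕ → ℕ → Cp X) (hf : ∀ n, Tendsto (f n) atTop (nhds (cpZero X))) :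
    ∃ m : ℕ → ℕ, StrictMono m ∧
      SetConv {z | ∃ n, ∃ j ≤ n, z = f j (m n)} (cpZero X) :=
  cp_alpha4_implies_alpha2minus_general h4 f hf
end

section
/- A topological space X is α_1 at x if and only if ONE does not have a winning strategy in the α_1-game at x, in which in each inning ONE plays a sequence converging to x and TWO must respond with a cofinite subset of it, TWO winning if the union of his choices converges to x. -/
open Filter Topology Set

/-- ONE has a winning strategy in the α₁-game at `x`: ONE plays sequences converging
to `x`, TWO must respond with a cofinite subset of ONE's sequence, and TWO wins if
the union of his choices converges to `x`. -/
def OneHasWinningStrategyAlphaOneGame {X : Type*} [TopologicalSpace X] (x : X) : Prop :=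
  ∃ σ : List (Set X) → Set X,
    (∀ h, ConvSeq (σ h) x) ∧
    ∀ T : ℕ → Set X,
      (∀ n, T n ⊆ σ (List.ofFn fun i : Fin n => T i) ∧
        (σ (List.ofFn fun i : Fin n => T i) \ T n).Finite) →
      ¬ ConvSeq (⋃ n, T n) x

/-- Legal histories of TWO's moves against strategy `σ`. -/
inductive Legal {X : Type*} (σ : List (Set X) → Set X) : List (Set X) → Prop
  | nil : Legal σ []
  | snoc (h c) : Legal σ h → c ⊆ σ h → (σ h \ c).Finite → Legal σ (h ++ [c])

lemma legal_countable {X : Type*} (σ : List (Set X) → Set X)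
    (hσ : ∀ h, (σ h).Countable) : {h | Legal σ h}.Countable := by
  have key : ∀ n, {h | Legal σ h ∧ h.length = n}.Countable := by
    intro n
    induction n with
    | zero =>
      refine Set.Countable.mono ?_ (Set.countable_singleton ([] : List (Set X)))
      rintro h ⟨-, hl⟩
      simp [List.length_eq_zero_iff.mp hl]
    | succ n ih =>
      have hsub : {h | Legal σ h ∧ h.length = n + 1} ⊆
          ⋃ h' ∈ {h | Legal σ h ∧ h.length = n},
            (fun F => h' ++ [σ h' \ F]) '' {F | F.Finite ∧ F ⊆ σ h'} := by
        rintro h ⟨hleg, hlen⟩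
        cases hleg with
        | nil => simp at hlen
        | snoc h' c hleg' hsubc hfin =>
          simp only [List.length_append, List.length_singleton] at hlen
          refine Set.mem_biUnion (show h' ∈ _ from ⟨hleg', by omega⟩) ?_
          exact ⟨σ h' \ c, ⟨hfin, Set.diff_subset⟩,
            by simp [Set.diff_diff_cancel_left hsubc]⟩
      refine Set.Countable.mono hsub ?_
      exact Set.Countable.biUnion ih fun h' _ =>
        Set.Countable.image (Set.countable_setOf_finite_subset (hσ h')) _
  have heq : {h | Legal σ h} = ⋃ n, {h | Legal σ h ∧ h.length = n} := by
    ext h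
    simp only [Set.mem_setOf_eq, Set.mem_iUnion]
    exact ⟨fun hh => ⟨h.length, hh, rfl⟩, fun ⟨n, hh, _⟩ => hh⟩
  rw [heq]
  exact Set.countable_iUnion key

/-- `X` is α₁ at `x` if and only if ONE has no winning strategy in the α₁-game at `x`. -/
theorem alpha1_iff_no_winning_strategy_alpha1_game {X : Type*} [TopologicalSpace X] (x : X) :
    (∀ S : ℕ → Set X, (∀ n, ConvSeq (S n) x) →
      ∃ T, T ⊆ ⋃ n, S n ∧ ConvSeq T x ∧ ∀ n, (S n \ T).Finite) ↔
    ¬ OneHasWinningStrategyAlphaOneGame x := by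
  constructor
  · -- α₁ implies no winning strategy
    rintro halpha ⟨σ, hσ, hwin⟩
    have hcount : {h | Legal σ h}.Countable :=
      legal_countable σ fun h => (hσ h).1
    have hne : {h | Legal σ h}.Nonempty := ⟨[], Legal.nil⟩
    obtain ⟨e, he⟩ := Set.Countable.exists_eq_range hcount hne
    -- apply α₁ to the family σ ∘ e
    obtain ⟨T, hTsub, hTconv, hTfin⟩ := halpha (fun n => σ (e n)) (fun n => hσ (e n))
    have hfinT : ∀ h, Legal σ h → (σ h \ T).Finite := by
      intro h hh
      have : h ∈ Set.range e := by rw [← he]; exact hh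
      obtain ⟨n, rfl⟩ := this
      exact hTfin n
    -- TWO's play
    let L : ℕ → List (Set X) := fun n => Nat.rec [] (fun _ l => l ++ [σ l ∩ T]) n
    have hL0 : L 0 = [] := rfl
    have hLs : ∀ n, L (n + 1) = L n ++ [σ (L n) ∩ T] := fun n => rfl
    set T' : ℕ → Set X := fun n => σ (L n) ∩ T with hT'
    have hLlegal : ∀ n, Legal σ (L n) := by
      intro n
      induction n with
      | zero => exact Legal.nil
      | succ n ih =>
        rw [hLs]
        refine Legal.snoc _ _ ih Set.inter_subset_left ?_
        exact (hfinT _ ih).subset (by intro y hy; exact ⟨hy.1, fun hyT => hy.2 ⟨hy.1, hyT⟩⟩)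
    have hofFn : ∀ n, (List.ofFn fun i : Fin n => T' i) = L n := by
      intro n
      induction n with
      | zero => rfl
      | succ n ih =>
        rw [List.ofFn_succ', hLs]
        simp only [List.concat_eq_append, Fin.coe_castSucc, Fin.val_last]
        rw [ih]
    have hplay : ∀ n, T' n ⊆ σ (List.ofFn fun i : Fin n => T' i) ∧
        (σ (List.ofFn fun i : Fin n => T' i) \ T' n).Finite := by
      intro n
      rw [hofFn]
      refine ⟨Set.inter_subset_left, ?_⟩
      exact (hfinT _ (hLlegal n)).subset
        (by intro y hy; exact ⟨hy.1, fun hyT => hy.2 ⟨hy.1, hyT⟩⟩)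
    refine hwin T' hplay ?_
    have hUsub : (⋃ n, T' n) ⊆ T := Set.iUnion_subset fun n => Set.inter_subset_right
    refine ⟨hTconv.1.mono hUsub, ?_, fun hx => hTconv.2.2.1 (hUsub hx), ?_⟩
    · -- infinite: T' 0 is infinite
      have h0 : (T' 0).Infinite := by
        have : σ (L 0) ∩ T = σ (L 0) \ (σ (L 0) \ T) := by
          ext y; constructor
          · rintro ⟨h1, h2⟩; exact ⟨h1, fun h3 => h3.2 h2⟩
          · rintro ⟨h1, h2⟩; by_contra h3
            exact h2 ⟨h1, fun h4 => h3 ⟨h1, h4⟩⟩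
        rw [hT']
        simp only [this]
        exact ((hσ (L 0)).2.1).diff (hfinT _ (hLlegal 0))
      exact h0.mono (Set.subset_iUnion T' 0)
    · intro U hU
      exact (hTconv.2.2.2 U hU).subset fun y hy => ⟨hUsub hy.1, hy.2⟩
  · -- no winning strategy implies α₁
    intro hno S hS
    by_contra hex
    push_neg at hex
    refine hno ⟨fun h => S h.length, fun h => hS h.length, ?_⟩
    intro T hT hconv
    have hlen : ∀ n : ℕ, (List.ofFn fun i : Fin n => T i).length = n := by simp
    obtain ⟨n, hn⟩ := hex (⋃ n, T n)
      (Set.iUnion_mono fun n => by simpa using (hT n).1) hconv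
    refine hn ?_
    have : (S n \ T n).Finite := by simpa using (hT n).2
    exact this.subset fun y hy =>
      ⟨hy.1, fun h => hy.2 (Set.mem_iUnion.mpr ⟨n, h⟩)⟩
end

section
/- If X is α_1, then for each x ∈ X, ONE does not have a winning strategy in the game Γ(X, x) where ONE plays sequences converging to x and TWO chooses infinite subsets of them, TWO winning if the union of his choices converges to x. -/
open Filter Topology Set

/-- ONE has a winning strategy in the game `Γ(X, x)`: ONE plays sequences converging
to `x`, TWO responds with infinite subsets; TWO wins iff the union of his choices
converges to `x`. -/
def OneHasWinningStrategy {X : Type*} [TopologicalSpace X] (x : X) : Prop :=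
  ∃ σ : List (Set X) → Set X,
    (∀ h, ConvSeq (σ h) x) ∧
    ∀ T : ℕ → Set X,
      (∀ n, T n ⊆ σ (List.ofFn fun i : Fin n => T i) ∧ (T n).Infinite) →
      ¬ ConvSeq (⋃ n, T n) x

/-- Positions reachable when TWO plays cofinite subsets of ONE's moves. -/
inductive Reach {X : Type*} (σ : List (Set X) → Set X) : List (Set X) → Prop
  | nil : Reach σ []
  | cons (h : List (Set X)) (F : Set X) : Reach σ h → F.Finite → F ⊆ σ h →
      Reach σ (h ++ [σ h \ F])

/-- Reachable positions of a fixed length form a countable set. -/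
lemma reach_len_countable {X : Type*} (σ : List (Set X) → Set X)
    (hc : ∀ h, (σ h).Countable) (n : ℕ) :
    {h : List (Set X) | Reach σ h ∧ h.length = n}.Countable := by
  induction n with
  | zero =>
    apply Set.Countable.mono _ (Set.countable_singleton ([] : List (Set X)))
    rintro h ⟨-, hl⟩
    simpa using List.length_eq_zero_iff.mp hl
  | succ n ih =>
    have : {h : List (Set X) | Reach σ h ∧ h.length = n + 1} ⊆
        ⋃ g ∈ {h : List (Set X) | Reach σ h ∧ h.length = n},
          (fun F => g ++ [σ g \ F]) '' {F | F.Finite ∧ F ⊆ σ g} := by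
      rintro h ⟨hr, hl⟩
      cases hr with
      | nil => simp at hl
      | cons g F hg hF hFs =>
        simp only [List.length_append, List.length_singleton] at hl
        exact Set.mem_biUnion ⟨hg, by omega⟩ ⟨F, ⟨hF, hFs⟩, rfl⟩
    exact Set.Countable.mono this <| Set.Countable.biUnion ih fun g _ =>
      Set.Countable.image (Set.countable_setOf_finite_subset (hc g)) _

lemma reach_countable {X : Type*} (σ : List (Set X) → Set X)
    (hc : ∀ h, (σ h).Countable) :
    {h : List (Set X) | Reach σ h}.Countable := by
  have : {h : List (Set X) | Reach σ h} =
      ⋃ n, {h : List (Set X) | Reach σ h ∧ h.length = n} := by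
    ext h; simp only [Set.mem_setOf_eq, Set.mem_iUnion]
    exact ⟨fun hr => ⟨h.length, hr, rfl⟩, fun ⟨n, hr, _⟩ => hr⟩
  rw [this]
  exact Set.countable_iUnion (reach_len_countable σ hc)

/-- If `X` is α₁, then ONE has no winning strategy in `Γ(X, x)` for any `x`. -/
theorem alpha1_implies_no_winning_strategy {X : Type*} [TopologicalSpace X]
    (h1 : ∀ (x : X) (S : ℕ → Set X), (∀ n, ConvSeq (S n) x) →
      ∃ T, T ⊆ ⋃ n, S n ∧ ConvSeq T x ∧ ∀ n, (S n \ T).Finite) :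
    ∀ x : X, ¬ OneHasWinningStrategy x := by
  rintro x ⟨σ, hσ, hwin⟩
  -- the countable family of all σ-moves at reachable positions
  have hcnt : (σ '' {h : List (Set X) | Reach σ h}).Countable :=
    (reach_countable σ fun h => (hσ h).1).image σ
  have hne : (σ '' {h : List (Set X) | Reach σ h}).Nonempty :=
    ⟨σ [], ⟨[], Reach.nil, rfl⟩⟩
  obtain ⟨f, hf⟩ := hcnt.exists_eq_range hne
  have hfconv : ∀ n, ConvSeq (f n) x := by
    intro n
    have : f n ∈ σ '' {h : List (Set X) | Reach σ h} := hf ▸ Set.mem_range_self n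
    obtain ⟨h, -, heq⟩ := this
    exact heq ▸ hσ h
  obtain ⟨T, -, hTconv, hTfin⟩ := h1 x f hfconv
  -- every reachable move meets T cofinitely
  have hreach : ∀ h, Reach σ h → (σ h \ T).Finite := by
    intro h hr
    have : σ h ∈ Set.range f := hf ▸ ⟨h, hr, rfl⟩
    obtain ⟨n, hn⟩ := this
    exact hn ▸ hTfin n
  -- TWO's play: always respond with σ(history) ∩ T
  let hist : ℕ → List (Set X) := fun n =>
    Nat.rec ([] : List (Set X)) (fun _ g => g ++ [σ g ∩ T]) n
  let T' : ℕ → Set X := fun n => σ (hist n) ∩ T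
  have hist_succ : ∀ n, hist (n + 1) = hist n ++ [T' n] := fun n => rfl
  have inter_eq : ∀ h : List (Set X), σ h ∩ T = σ h \ (σ h \ T) := by
    intro h; ext y; simp (config := { contextual := true }) [and_comm]
  have hist_reach : ∀ n, Reach σ (hist n) := by
    intro n
    induction n with
    | zero => exact Reach.nil
    | succ n ih =>
      rw [hist_succ]
      show Reach σ (hist n ++ [σ (hist n) ∩ T])
      rw [inter_eq]
      exact Reach.cons _ _ ih (hreach _ ih) Set.diff_subset
  have hist_eq : ∀ n, hist n = List.ofFn (fun i : Fin n => T' i) := by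
    intro n
    induction n with
    | zero => rfl
    | succ n ih =>
      rw [hist_succ, List.ofFn_succ', List.concat_eq_append, ih]
      congr 1
  have hT'inf : ∀ n, (T' n).Infinite := by
    intro n
    have := (hσ (hist n)).2.1.diff (hreach _ (hist_reach n))
    rw [← inter_eq] at this
    exact this
  have := hwin T' (fun n => ⟨by rw [← hist_eq n]; exact Set.inter_subset_left, hT'inf n⟩)
  apply this
  obtain ⟨hTc, hTi, hTx, hTU⟩ := hTconv
  have hsub : (⋃ n, T' n) ⊆ T := Set.iUnion_subset fun n => Set.inter_subset_right
  refine ⟨hTc.mono hsub, (hT'inf 0).mono (Set.subset_iUnion T' 0),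
    fun hx => hTx (hsub hx), fun U hU => (hTU U hU).subset ?_⟩
  exact Set.diff_subset_diff_left hsub
end

section
/- Let X be a hereditarily Lindelöf subspace of a product ∏_{i∈I} X_i of topological spaces, Y a second countable Hausdorff space, and f : X → Y continuous. Then there exist a countable J ⊆ I and a continuous map g : pr_J[X] → Y (where pr_J is the projection onto coordinates in J) such that f = g ∘ pr_J restricted to X. -/
/-!
For each set `B` of a countable basis of `Y`, the open set `f ⁻¹' B` is Lindelöf, hence a countable
union of traces of basic cylinders, each of which depends on finitely many coordinates. Collecting
these coordinates gives a countable `J` such that `f` is continuous for the topology that `X`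
inherits from the projection onto the coordinates in `J`. As `Y` is T₀, `f` is then constant on
the fibres of that projection and descends along the quotient map onto its image.
-/

open Topology Set TopologicalSpace

section Factorization

variable {X Y Z : Type*} [TopologicalSpace Y] [TopologicalSpace Z]

theorem exists_continuous_comp_rangeFactorization [T0Space Y] (p : X → Z) {f : X → Y}
    (hf : Continuous[induced p ‹_›, ‹_›] f) :
    ∃ g : range p → Y, Continuous g ∧ f = g ∘ rangeFactorization p := by
  let _ : TopologicalSpace X := induced p ‹_›
  have hp : IsInducing (rangeFactorization p) :=
    (IsInducing.subtypeVal.of_comp_iff).1 (IsInducing.induced p)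
  have hq : IsQuotientMap (rangeFactorization p) :=
    hp.isQuotientMap_of_surjective rangeFactorization_surjective
  have hfib : Function.FactorsThrough f (rangeFactorization p) := fun a b hab =>
    ((hp.inseparable_iff.1 (hab ▸ Inseparable.refl _)).map hf).eq
  have hgf : (f ∘ Function.surjInv rangeFactorization_surjective) ∘ rangeFactorization p = f :=
    funext fun x => hfib (Function.rightInverse_surjInv _ _)
  exact ⟨_, hq.continuous_iff.2 (by rwa [hgf]), hgf.symm⟩

end Factorization

section CountablyManyCoordinates

variable {ι X : Type*} {π : ι → Type*} [∀ i, TopologicalSpace (π i)]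

theorem IsOpen.mono_induced_domRestrict {J K : Set ι} (hJK : J ⊆ K) {e : X → ∀ i, π i}
    {s : Set X} (hs : IsOpen[induced (J.domRestrict ∘ e) inferInstance] s) :
    IsOpen[induced (K.domRestrict ∘ e) inferInstance] s := by
  obtain ⟨W, hW, rfl⟩ := isOpen_induced_iff.1 hs
  exact isOpen_induced_iff.2
    ⟨domRestrict₂ hJK ⁻¹' W, hW.preimage (Pi.continuous_domRestrict₂ hJK), rfl⟩

variable [TopologicalSpace X]

theorem exists_finite_domRestrict_preimage_subset {U : Set (∀ i, π i)} (hU : IsOpen U)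
    {x : ∀ i, π i} (hx : x ∈ U) :
    ∃ F : Set ι, F.Finite ∧ ∃ W : Set (∀ i : F, π i), IsOpen W ∧
      x ∈ F.domRestrict ⁻¹' W ∧ F.domRestrict ⁻¹' W ⊆ U := by
  obtain ⟨I, u, hu, hIU⟩ := isOpen_pi_iff.1 hU x hx
  refine ⟨I, I.finite_toSet, univ.pi fun i => u i,
    isOpen_set_pi finite_univ fun i _ => (hu i i.2).1, fun i _ => (hu i i.2).2, ?_⟩
  intro y hy
  exact hIU fun i hi => hy ⟨i, hi⟩ (mem_univ _)

theorem IsLindelof.exists_countable_isOpen_induced_domRestrict {e : X → ∀ i, π i}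
    (he : IsInducing e) {V : Set X} (hVL : IsLindelof V) (hV : IsOpen V) :
    ∃ J : Set ι, J.Countable ∧ IsOpen[induced (J.domRestrict ∘ e) inferInstance] V := by
  have hcyl : ∀ x : V, ∃ F : Set ι, F.Finite ∧ ∃ W : Set (∀ i : F, π i), IsOpen W ∧
      (x : X) ∈ (F.domRestrict ∘ e) ⁻¹' W ∧ (F.domRestrict ∘ e) ⁻¹' W ⊆ V := by
    rintro ⟨x, hx⟩
    obtain ⟨U, hU, rfl⟩ := he.isOpen_iff.1 hV
    obtain ⟨F, hF, W, hW, hxW, hWU⟩ := exists_finite_domRestrict_preimage_subset hU hx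
    exact ⟨F, hF, W, hW, hxW, preimage_mono hWU⟩
  choose F hF W hW hxW hWV using hcyl
  obtain ⟨C, hC, hVC⟩ := hVL.elim_countable_subcover (fun x => (F x).domRestrict ∘ e ⁻¹' W x)
    (fun x => (hW x).preimage ((Pi.continuous_domRestrict _).comp he.continuous))
    fun x hx => mem_iUnion.2 ⟨⟨x, hx⟩, hxW ⟨x, hx⟩⟩
  have hV_eq : V = ⋃ x ∈ C, (F x).domRestrict ∘ e ⁻¹' W x :=
    hVC.antisymm (iUnion₂_subset fun x _ => hWV x)
  have hUnion : IsOpen[induced ((⋃ x ∈ C, F x).domRestrict ∘ e) inferInstance]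
      (⋃ x ∈ C, (F x).domRestrict ∘ e ⁻¹' W x) :=
    @isOpen_biUnion _ _ (induced _ inferInstance) _ _ fun x hx =>
      (isOpen_induced (hW x)).mono_induced_domRestrict (subset_biUnion_of_mem hx)
  rw [← hV_eq] at hUnion
  exact ⟨⋃ x ∈ C, F x, hC.biUnion fun x _ => (hF x).countable, hUnion⟩

theorem exists_countable_continuous_induced_domRestrict [HereditarilyLindelofSpace X]
    {Y : Type*} [TopologicalSpace Y] [SecondCountableTopology Y] {e : X → ∀ i, π i}
    (he : IsInducing e) {f : X → Y} (hf : Continuous f) :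
    ∃ J : Set ι, J.Countable ∧ Continuous[induced (J.domRestrict ∘ e) inferInstance, ‹_›] f := by
  have hB : ∀ B : countableBasis Y, ∃ J : Set ι, J.Countable ∧
      IsOpen[induced (J.domRestrict ∘ e) inferInstance] (f ⁻¹' B) := fun B =>
    (HereditarilyLindelofSpace.isLindelof _).exists_countable_isOpen_induced_domRestrict he
      ((isOpen_of_mem_countableBasis B.2).preimage hf)
  choose J hJ hJB using hB
  have := (countable_countableBasis Y).to_subtype
  refine ⟨⋃ B, J B, countable_iUnion hJ, ?_⟩
  exact (@IsTopologicalBasis.continuous_iff _ _ (induced _ inferInstance) _ _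
    (isBasis_countableBasis Y) f).2 fun B hB =>
    (hJB ⟨B, hB⟩).mono_induced_domRestrict (subset_iUnion J ⟨B, hB⟩)

end CountablyManyCoordinates

/-- If `X` is a hereditarily Lindelöf subspace of a product, `Y` is second countable
Hausdorff, and `f : X → Y` is continuous, then `f` factors continuously through the
projection onto countably many coordinates. -/
theorem factor_through_countably_many_coordinates
    {ι Y : Type*} {π : ι → Type*} [∀ i, TopologicalSpace (π i)]
    [TopologicalSpace Y] [SecondCountableTopology Y] [T2Space Y]
    (X : Set (∀ i, π i)) [HereditarilyLindelofSpace X]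
    (f : X → Y) (hf : Continuous f) :
    ∃ J : Set ι, J.Countable ∧
      ∃ g : {q : ∀ j : J, π j // ∃ x ∈ X, (fun j : J => x j) = q} → Y,
        Continuous g ∧
        ∀ x : X, f x = g ⟨fun j : J => (x : ∀ i, π i) j, x, x.2, rfl⟩ := by
  obtain ⟨J, hJ, hfJ⟩ := exists_countable_continuous_induced_domRestrict IsInducing.subtypeVal hf
  obtain ⟨g, hg, hfg⟩ := exists_continuous_comp_rangeFactorization _ hfJ
  have hrange : ∀ q : {q : ∀ j : J, π j // ∃ x ∈ X, (fun j : J => x j) = q},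
      q.1 ∈ range (J.domRestrict ∘ Subtype.val : X → ∀ j : J, π j) := fun q =>
    let ⟨x, hx, hq⟩ := q.2; ⟨⟨x, hx⟩, hq⟩
  exact ⟨J, hJ, fun q => g ⟨q.1, hrange q⟩, hg.comp (continuous_subtype_val.subtype_mk _),
    fun x => congrFun hfg x⟩
end

section
/- Every Σ-product of first countable spaces has countable tightness: if A ⊆ Σ_{i∈I} X_i and y is in the closure of A, then y is in the closure of some countable subset of A. -/
/-!
Restricting to countably many coordinates lands in a countable product of first countable spaces,
which is first countable and hence countably tight. A closing-off argument then produces countable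
index sets `S₀ ⊆ S₁ ⊆ ⋯` and countable `Cₙ ⊆ A` such that `y|Sₙ` lies in the closure of `Cₙ|Sₙ`
and every point of `Cₙ` differs from `y` only on `Sₙ₊₁`. A basic neighbourhood of `y` constrains
finitely many coordinates; those inside `⋃ Sₙ` already lie in some `S_N`, and outside `⋃ Sₙ` all
points of `⋃ Cₙ` agree with `y`, so `y` is in the closure of the countable set `⋃ Cₙ`.
-/

open Filter Topology Set

theorem exists_countable_subset_mem_closure_image {α X : Type*} [TopologicalSpace X]
    [FirstCountableTopology X] {f : α → X} {A : Set α} {z : X} (hz : z ∈ closure (f '' A)) :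
    ∃ C ⊆ A, C.Countable ∧ z ∈ closure (f '' C) := by
  obtain ⟨u, hu, hlim⟩ := mem_closure_iff_seq_limit.mp hz
  choose a haA hau using hu
  refine ⟨range a, range_subset_iff.mpr haA, countable_range a, ?_⟩
  exact mem_closure_of_tendsto hlim (Eventually.of_forall fun n => ⟨a n, mem_range_self n, hau n⟩)

section Pi

variable {ι : Type*} {π : ι → Type*} [∀ i, TopologicalSpace (π i)]

theorem exists_countable_subset_restrict_mem_closure [∀ i, FirstCountableTopology (π i)]
    {S : Set ι} (hS : S.Countable) {A : Set (∀ i, π i)} {y : ∀ i, π i} (hy : y ∈ closure A) :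
    ∃ C ⊆ A, C.Countable ∧ S.domRestrict y ∈ closure (S.domRestrict '' C) := by
  have : Countable S := hS.to_subtype
  refine exists_countable_subset_mem_closure_image ?_
  exact map_mem_closure (continuous_pi fun i => continuous_apply i.1) hy (mapsTo_image _ A)

theorem mem_closure_of_forall_restrict_mem_closure {κ : Type*} [Nonempty κ] {S : κ → Set ι}
    (hS : Directed (· ⊆ ·) S) {B : Set (∀ i, π i)} {y : ∀ i, π i}
    (hy : ∀ k, (S k).domRestrict y ∈ closure ((S k).domRestrict '' B))
    (hB : ∀ b ∈ B, ∀ i ∉ ⋃ k, S k, b i = y i) : y ∈ closure B := by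
  classical
  rw [mem_closure_iff_nhds]
  intro U hU
  rw [nhds_pi, mem_pi'] at hU
  obtain ⟨I, t, ht, hIt⟩ := hU
  obtain ⟨k, hk⟩ := hS.exists_mem_subset_of_finset_subset_biUnion
    (s := I.filter (· ∈ ⋃ k, S k)) fun i hi => (Finset.mem_filter.mp hi).2
  have hV : (Subtype.val ⁻¹' (I : Set ι)).pi (fun i : S k => t i) ∈ 𝓝 ((S k).domRestrict y) :=
    set_pi_mem_nhds (I.finite_toSet.preimage Subtype.val_injective.injOn) fun i _ => ht i
  obtain ⟨_, hbV, b, hb, rfl⟩ := mem_closure_iff_nhds.mp (hy k) _ hV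
  refine ⟨b, hIt fun i hi => ?_, hb⟩
  by_cases hiS : i ∈ ⋃ k, S k
  · exact hbV ⟨i, hk (Finset.mem_filter.mpr ⟨hi, hiS⟩)⟩ hi
  · rw [hB b hb i hiS]
    exact mem_of_mem_nhds (ht i)

theorem exists_countable_subset_mem_closure_of_countable_ne [∀ i, FirstCountableTopology (π i)]
    {A : Set (∀ i, π i)} {y : ∀ i, π i} (hA : ∀ a ∈ A, {i | a i ≠ y i}.Countable)
    (hy : y ∈ closure A) : ∃ B ⊆ A, B.Countable ∧ y ∈ closure B := by
  choose C hCA hCc hCy using fun S : {S : Set ι // S.Countable} =>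
    exists_countable_subset_restrict_mem_closure S.2 hy
  let next (S : {S : Set ι // S.Countable}) : {S : Set ι // S.Countable} :=
    ⟨S ∪ ⋃ c ∈ C S, {i | c i ≠ y i}, S.2.union ((hCc S).biUnion fun c hc => hA c (hCA S hc))⟩
  let S (n : ℕ) := next^[n] ⟨∅, countable_empty⟩
  have hS_succ (n : ℕ) : S (n + 1) = next (S n) := Function.iterate_succ_apply' next n _
  have hS_mono : Monotone fun n => (S n).1 :=
    monotone_nat_of_le_succ fun n => by rw [hS_succ]; exact subset_union_left
  refine ⟨⋃ n, C (S n), iUnion_subset fun n => hCA _, countable_iUnion fun n => hCc _, ?_⟩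
  refine mem_closure_of_forall_restrict_mem_closure hS_mono.directed_le
    (fun n => closure_mono (image_mono (subset_iUnion _ n)) (hCy _)) ?_
  rintro b hb i hi
  obtain ⟨n, hbn⟩ := mem_iUnion.mp hb
  by_contra hne
  refine hi (mem_iUnion.mpr ⟨n + 1, ?_⟩)
  rw [hS_succ]
  exact Or.inr (mem_biUnion hbn hne)

end Pi

/-- Every Σ-product of first countable spaces has countable tightness. -/
theorem sigma_product_countably_tight
    {ι : Type*} {π : ι → Type*} [∀ i, TopologicalSpace (π i)]
    [∀ i, FirstCountableTopology (π i)] (x : ∀ i, π i)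
    (A : Set {y : ∀ i, π i // {i | y i ≠ x i}.Countable})
    (y : {y : ∀ i, π i // {i | y i ≠ x i}.Countable}) (hy : y ∈ closure A) :
    ∃ B ⊆ A, B.Countable ∧ y ∈ closure B := by
  have hA : ∀ a ∈ Subtype.val '' A, {i | a i ≠ y.1 i}.Countable := by
    rintro _ ⟨a, -, rfl⟩
    refine (a.2.union y.2).mono fun i hi => ?_
    by_contra h
    simp only [mem_union, mem_ofPred_eq, not_or, not_not] at h
    exact hi (h.1.trans h.2.symm)
  obtain ⟨B, hBA, hBc, hyB⟩ :=
    exists_countable_subset_mem_closure_of_countable_ne hA (closure_subtype.mp hy)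
  refine ⟨Subtype.val ⁻¹' B, ?_, hBc.preimage Subtype.val_injective, ?_⟩
  · exact (preimage_mono hBA).trans (preimage_image_eq A Subtype.val_injective).le
  · rw [closure_subtype, image_preimage_eq_of_subset (hBA.trans (image_subset_range _ _))]
    exact hyB
end

section
/- Every Σ-product of first countable spaces is Fréchet-Urysohn. -/
/-!
Let `y` lie in the closure of a set `A` of points each differing from `y` in only countably many
coordinates. A countable product of first countable spaces is first countable, so for every
countable set `J` of coordinates some sequence in `A` converges to `y` in the coordinates of `J`.
Starting from `J = ∅` and repeatedly adding the coordinates in which the terms of such a sequence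
differ from `y`, the union of these sets is a countable `J` together with a set `B ⊆ A` of points
equal to `y` outside `J` and having `y` in their closure for the coordinates of `J`. A sequence in
`B` converging to `y` in the coordinates of `J` then converges to `y` outright.
-/

open Filter Topology Set

section

variable {ι : Type*} {π : ι → Type*} [∀ i, TopologicalSpace (π i)]

/-- The neighbourhoods of `y` that constrain only the coordinates in `J`, i.e. the pullback along
`J.restrict` of the neighbourhood filter of `J.restrict y`. -/
def coordNhds (J : Set ι) (y : ∀ i, π i) : Filter (∀ i, π i) :=
  ⨅ i ∈ J, comap (Function.eval i) (𝓝 (y i))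

variable {J : Set ι} {y : ∀ i, π i}

theorem tendsto_coordNhds_iff {α : Type*} {l : Filter α} {v : α → ∀ i, π i} :
    Tendsto v l (coordNhds J y) ↔ ∀ i ∈ J, Tendsto (fun a => v a i) l (𝓝 (y i)) := by
  simp only [coordNhds, tendsto_iInf, tendsto_comap_iff, Function.comp_def, Function.eval]

theorem nhds_le_coordNhds : 𝓝 y ≤ coordNhds J y :=
  tendsto_coordNhds_iff.2 fun i _ => (continuous_apply i).tendsto y

theorem coordNhds_anti : Antitone fun J : Set ι => coordNhds J y :=
  fun _ _ hJ => biInf_mono hJ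

theorem coordNhds_iUnion (J : ℕ → Set ι) : coordNhds (⋃ n, J n) y = ⨅ n, coordNhds (J n) y :=
  iInf_iUnion _ _

theorem Set.Countable.isCountablyGenerated_coordNhds [∀ i, FirstCountableTopology (π i)]
    (hJ : J.Countable) : (coordNhds J y).IsCountablyGenerated := by
  have := hJ.to_subtype
  rw [coordNhds, iInf_subtype']
  infer_instance

theorem tendsto_nhds_of_tendsto_coordNhds {α : Type*} {l : Filter α} {v : α → ∀ i, π i}
    (hv : Tendsto v l (coordNhds J y)) (hvJ : ∀ a, ∀ i ∉ J, v a i = y i) :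
    Tendsto v l (𝓝 y) := by
  refine tendsto_pi_nhds.2 fun i => ?_
  by_cases hi : i ∈ J
  · exact tendsto_coordNhds_iff.1 hv i hi
  · simp only [hvJ _ i hi, tendsto_const_nhds]

variable [∀ i, FirstCountableTopology (π i)] {A : Set (∀ i, π i)}

theorem Set.Countable.exists_seq_tendsto_coordNhds (hJ : J.Countable) (hyA : y ∈ closure A) :
    ∃ u : ℕ → ∀ i, π i, Tendsto u atTop (coordNhds J y) ∧ ∀ n, u n ∈ A :=
  have := hJ.isCountablyGenerated_coordNhds (y := y)
  exists_seq_forall_of_frequently <| frequently_iff_neBot.2 <|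
    NeBot.mono (mem_closure_iff_clusterPt.1 hyA) (inf_le_inf_right _ nhds_le_coordNhds)

theorem exists_countable_coords_of_mem_closure (hA : ∀ a ∈ A, {i | a i ≠ y i}.Countable)
    (hyA : y ∈ closure A) :
    ∃ J : Set ι, J.Countable ∧ ∃ B ⊆ A, (∀ b ∈ B, ∀ i ∉ J, b i = y i) ∧
      (coordNhds J y ⊓ 𝓟 B).NeBot := by
  choose u hu huA using fun J : {J : Set ι // J.Countable} =>
    J.2.exists_seq_tendsto_coordNhds hyA
  let next (J : {J : Set ι // J.Countable}) : {J : Set ι // J.Countable} :=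
    ⟨J ∪ ⋃ n, {i | u J n i ≠ y i}, J.2.union (countable_iUnion fun n => hA _ (huA J n))⟩
  let K (n : ℕ) : {J : Set ι // J.Countable} := next^[n] ⟨∅, countable_empty⟩
  have hK_succ (n : ℕ) : K (n + 1) = next (K n) := Function.iterate_succ_apply' _ _ _
  have hK : Monotone fun n => (K n : Set ι) :=
    monotone_nat_of_le_succ fun n => hK_succ n ▸ subset_union_left
  refine ⟨⋃ n, K n, countable_iUnion fun n => (K n).2, ⋃ n, range (u (K n)),
    iUnion_subset fun n => range_subset_iff.2 (huA _), ?_, ?_⟩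
  · simp only [mem_iUnion, mem_range]
    rintro _ ⟨n, m, rfl⟩ i hi
    by_contra hne
    have hi_succ : i ∈ (K (n + 1) : Set ι) := by
      rw [hK_succ]
      exact Or.inr (mem_iUnion.2 ⟨m, hne⟩)
    exact hi ⟨n + 1, hi_succ⟩
  · rw [coordNhds_iUnion, iInf_inf]
    refine iInf_neBot_of_directed'
      (directed_of_isDirected_le fun m n hmn => inf_le_inf_right _ (coordNhds_anti (hK hmn)))
      fun n => ?_
    have hu_mem : ∀ m, u (K n) m ∈ ⋃ n, range (u (K n)) :=
      fun m => mem_iUnion.2 ⟨n, mem_range_self m⟩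
    exact (tendsto_inf.2 ⟨hu (K n), tendsto_principal.2 (Eventually.of_forall hu_mem)⟩).neBot

theorem mem_seqClosure_of_mem_closure_of_countable_ne
    (hA : ∀ a ∈ A, {i | a i ≠ y i}.Countable) (hyA : y ∈ closure A) : y ∈ seqClosure A := by
  obtain ⟨J, hJ, B, hBA, hBJ, hB⟩ := exists_countable_coords_of_mem_closure hA hyA
  have := hJ.isCountablyGenerated_coordNhds (y := y)
  obtain ⟨v, hv, hvB⟩ := exists_seq_forall_of_frequently (frequently_iff_neBot.2 hB)
  exact ⟨v, fun n => hBA (hvB n), tendsto_nhds_of_tendsto_coordNhds hv fun n => hBJ _ (hvB n)⟩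

end

/-- Every Σ-product of first countable spaces is Fréchet-Urysohn. -/
theorem sigma_product_frechetUrysohn
    {ι : Type*} {π : ι → Type*} [∀ i, TopologicalSpace (π i)]
    [∀ i, FirstCountableTopology (π i)] (x : ∀ i, π i) :
    FrechetUrysohnSpace {y : ∀ i, π i // {i | y i ≠ x i}.Countable} := by
  refine ⟨fun A y hy => ?_⟩
  have hne : ∀ a ∈ Subtype.val '' A, {i | a i ≠ y.1 i}.Countable := by
    rintro _ ⟨z, -, rfl⟩
    refine (z.2.union y.2).mono fun i hi => ?_
    by_contra h
    obtain ⟨hzx, hyx⟩ := not_or.1 h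
    exact hi ((not_not.1 hzx).trans (not_not.1 hyx).symm)
  obtain ⟨a, haA, ha⟩ := mem_seqClosure_of_mem_closure_of_countable_ne hne
    (mem_closure_image continuous_subtype_val.continuousAt hy)
  choose b hbA hb using haA
  refine ⟨b, hbA, tendsto_subtype_rng.2 ?_⟩
  simpa only [hb] using ha
end

section
/- Every Σ-product of first countable spaces is α_1. -/
/-!
All countably many sets converging to `y` are supported, together with `y`, on a countable set
`J` of coordinates. On the points that agree with `y` outside `J`, the neighbourhood filter of
`y` is pulled back from the countable, hence first countable, product `∏ j ∈ J, π j`, so it is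
countably generated. For a countably generated filter with antitone basis `U`, the
diagonal set `⋃ n, S n ∩ U n` meets each `S n` cofinitely and still converges.
-/

open Filter Topology Set

theorem Filter.exists_diagonal_of_isCountablyGenerated {X : Type*} {l : Filter X}
    [l.IsCountablyGenerated] {S : ℕ → Set X} (hS : ∀ n, ∀ U ∈ l, (S n \ U).Finite) :
    ∃ T ⊆ ⋃ n, S n, (∀ U ∈ l, (T \ U).Finite) ∧ ∀ n, (S n \ T).Finite := by
  obtain ⟨U, hU⟩ := l.exists_antitone_basis
  refine ⟨⋃ n, S n ∩ U n, iUnion_mono fun n => inter_subset_left, fun V hV => ?_, fun n => ?_⟩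
  · obtain ⟨k, hk⟩ := hU.mem_iff.mp hV
    -- a point of `S n ∩ U n` outside `V` has `n < k`, because `U n ⊆ U k ⊆ V` once `k ≤ n`
    refine ((finite_lt_nat k).biUnion fun n _ => hS n V hV).subset ?_
    rintro p ⟨hp, hpV⟩
    obtain ⟨n, hpS, hpU⟩ := mem_iUnion.mp hp
    exact mem_biUnion (not_le.mp fun hkn => hpV (hk (hU.antitone hkn hpU))) ⟨hpS, hpV⟩
  · exact (hS n (U n) (hU.mem n)).subset fun p ⟨hpS, hpT⟩ =>
      ⟨hpS, fun hpU => hpT (mem_iUnion_of_mem n ⟨hpS, hpU⟩)⟩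

theorem exists_setConv_diagonal {X : Type*} [TopologicalSpace X] {y : X} {Z : Set X}
    [(𝓝[Z] y).IsCountablyGenerated] {S : ℕ → Set X} (hSZ : ∀ n, S n ⊆ Z)
    (hS : ∀ n, SetConv (S n) y) :
    ∃ T ⊆ ⋃ n, S n, SetConv T y ∧ ∀ n, (S n \ T).Finite := by
  have hS' : ∀ n, ∀ U ∈ 𝓝[Z] y, (S n \ U).Finite := fun n U hU => by
    obtain ⟨V, hV, hVU⟩ := mem_nhdsWithin_iff_exists_mem_nhds_inter.mp hU
    exact (hS n V hV).subset fun p ⟨hpS, hpU⟩ => ⟨hpS, fun hpV => hpU (hVU ⟨hpV, hSZ n hpS⟩)⟩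
  obtain ⟨T, hTS, hT, hST⟩ := exists_diagonal_of_isCountablyGenerated hS'
  exact ⟨T, hTS, fun V hV => hT V (mem_nhdsWithin_of_mem_nhds hV), hST⟩

theorem ConvSeq.setConv {X : Type*} [TopologicalSpace X] {S : Set X} {y : X}
    (hS : ConvSeq S y) : SetConv S y :=
  hS.2.2.2

theorem ConvSeq.of_diagonal {X : Type*} [TopologicalSpace X] {y : X} {S : ℕ → Set X}
    {T : Set X} (hS : ∀ n, ConvSeq (S n) y) (hTS : T ⊆ ⋃ n, S n) (hT : SetConv T y)
    (hST : ∀ n, (S n \ T).Finite) : ConvSeq T y :=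
  ⟨(countable_iUnion fun n => (hS n).1).mono hTS,
    fun hTfin => (hS 0).2.1 ((hST 0).of_sdiff hTfin),
    fun hy => (mem_iUnion.mp (hTS hy)).elim fun n hn => (hS n).2.2.1 hn,
    hT⟩

theorem Pi.isCountablyGenerated_nhdsWithin_eq_off {ι : Type*} {π : ι → Type*}
    [∀ i, TopologicalSpace (π i)] [∀ i, FirstCountableTopology (π i)] {J : Set ι}
    (hJ : J.Countable) (y : ∀ i, π i) :
    (𝓝[{p | ∀ i ∉ J, p i = y i}] y).IsCountablyGenerated := by
  have : Countable J := hJ.to_subtype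
  set Z := {p : ∀ i, π i | ∀ i ∉ J, p i = y i}
  have hle : comap (J.domRestrict (π := π)) (𝓝 (J.domRestrict y)) ⊓ 𝓟 Z ≤ 𝓝 y := by
    refine tendsto_id'.mp (tendsto_pi_nhds.mpr fun i => ?_)
    by_cases hi : i ∈ J
    · exact (((continuous_apply (A := fun j : J => π j) ⟨i, hi⟩).tendsto _).comp
        tendsto_comap).mono_left inf_le_left
    · have hZi : ∀ᶠ p in 𝓟 Z, p i = y i := eventually_principal.mpr fun p hp => hp i hi
      exact (tendsto_nhds_of_eventually_eq hZi).mono_left inf_le_right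
  have heq : 𝓝[Z] y = comap (J.domRestrict (π := π)) (𝓝 (J.domRestrict y)) ⊓ 𝓟 Z :=
    le_antisymm (inf_le_inf_right _ ((Pi.continuous_domRestrict J).tendsto y).le_comap)
      (le_inf hle inf_le_right)
  rw [heq]
  infer_instance

theorem Topology.IsInducing.isCountablyGenerated_nhdsWithin_preimage {X Y : Type*}
    [TopologicalSpace X] [TopologicalSpace Y] {f : X → Y} (hf : IsInducing f) {x : X}
    {Z : Set Y} [(𝓝[Z] (f x)).IsCountablyGenerated] :
    (𝓝[f ⁻¹' Z] x).IsCountablyGenerated := by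
  rw [nhdsWithin, hf.nhds_eq_comap, ← comap_principal, ← comap_inf]
  exact comap.isCountablyGenerated (𝓝[Z] (f x)) f

/-- Every Σ-product of first countable spaces is α₁. -/
theorem sigma_product_alpha_one
    {ι : Type*} {π : ι → Type*} [∀ i, TopologicalSpace (π i)]
    [∀ i, FirstCountableTopology (π i)] (x : ∀ i, π i) :
    ∀ (y : {p : ∀ i, π i // {i | p i ≠ x i}.Countable})
      (S : ℕ → Set {p : ∀ i, π i // {i | p i ≠ x i}.Countable}),
      (∀ n, ConvSeq (S n) y) →
      ∃ T, T ⊆ ⋃ n, S n ∧ ConvSeq T y ∧ ∀ n, (S n \ T).Finite := by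
  intro y S hS
  have hsupp (p : {p : ∀ i, π i // {i | p i ≠ x i}.Countable}) :
      {i | p.1 i ≠ y.1 i}.Countable :=
    (p.2.union y.2).mono fun i hi => not_and_or.mp fun h => hi (h.1.trans h.2.symm)
  set J : Set ι := ⋃ n, ⋃ p ∈ S n, {i | p.1 i ≠ y.1 i}
  have hJ : J.Countable := countable_iUnion fun n => (hS n).1.biUnion fun p _ => hsupp p
  have hSJ (n : ℕ) : S n ⊆ Subtype.val ⁻¹' {p | ∀ i ∉ J, p i = y.1 i} := fun p hp i hi =>
    not_not.mp fun hpy => hi (mem_iUnion_of_mem n (mem_biUnion hp hpy))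
  have := Pi.isCountablyGenerated_nhdsWithin_eq_off hJ y.1
  have := IsEmbedding.subtypeVal.isInducing.isCountablyGenerated_nhdsWithin_preimage (x := y)
    (Z := {p | ∀ i ∉ J, p i = y.1 i})
  obtain ⟨T, hTS, hT, hST⟩ := exists_setConv_diagonal hSJ fun n => (hS n).setConv
  exact ⟨T, hTS, .of_diagonal hS hTS hT hST, hST⟩
end

section
/- If all finite powers of a Tychonoff space X are Lindelöf, then C_p(X) has countable tightness (Arhangel'skii–Pytkeev theorem, one direction). -/
/-! A point `f ∈ closure A` of `C_p(X)` can be approximated within `ε` on any `n`-tuple of points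
of `X` by some `g ∈ A`. The tuples approximated by a fixed `g` form an open subset of `Xⁿ`, so
since `Xⁿ` is Lindelöf countably many `g` serve all tuples. As basic neighbourhoods of `f` only
constrain finitely many coordinates, the union of these countable families over all `n` and
`ε = 1/(k+1)` is a countable subset of `A` with `f` in its closure. -/

open Filter Topology Set

open Metric

theorem isOpen_setOf_forall_dist_lt {ι Z α : Type*} [Finite ι] [TopologicalSpace Z]
    [PseudoMetricSpace α] {u v : ι → Z → α} (hu : ∀ i, Continuous (u i))
    (hv : ∀ i, Continuous (v i)) (ε : ℝ) :
    IsOpen {z | ∀ i, dist (u i z) (v i z) < ε} := by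
  simp only [ofPred_forall]
  exact isOpen_iInter_of_finite fun i => isOpen_lt ((hu i).dist (hv i)) continuous_const

theorem nhds_pi_hasBasis_ball_inv_nat_succ {ι α : Type*} [PseudoMetricSpace α] (f : ι → α) :
    (𝓝 f).HasBasis (fun p : Set ι × ℕ => p.1.Finite)
      (fun p => p.1.pi fun i => ball (f i) (1 / (p.2 + 1))) := by
  rw [nhds_pi]
  refine (hasBasis_pi_same_index (fun i => nhds_basis_ball_inv_nat_succ (x := f i))
    fun I k hI _ => ?_).congr (by simp) fun _ _ => rfl
  obtain ⟨N, hN⟩ := (hI.image k).bddAbove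
  refine ⟨N, trivial, fun i hi => ball_subset_ball ?_⟩
  gcongr
  exact_mod_cast hN (mem_image_of_mem k hi)

namespace Cp

variable {X : Type*} [TopologicalSpace X]

theorem mem_closure_iff {A : Set (Cp X)} {f : Cp X} :
    f ∈ closure A ↔ ∀ I : Set X, I.Finite → ∀ k : ℕ,
      ∃ g ∈ A, ∀ x ∈ I, dist (g.1 x) (f.1 x) < 1 / (k + 1) := by
  rw [mem_closure_iff_nhds_basis
    (by rw [nhds_induced]; exact (nhds_pi_hasBasis_ball_inv_nat_succ f.1).comap Subtype.val)]
  simp only [Prod.forall, mem_preimage, Set.mem_pi, mem_ball]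
  exact forall_congr' fun _ => forall_comm

theorem exists_countable_approx_on_tuples {n : ℕ} [LindelofSpace (Fin n → X)]
    {A : Set (Cp X)} {f : Cp X} (hf : f ∈ closure A) {ε : ℝ} (hε : 0 < ε) :
    ∃ B ⊆ A, B.Countable ∧ ∀ x : Fin n → X, ∃ g ∈ B, ∀ i, dist (g.1 (x i)) (f.1 (x i)) < ε := by
  let W : A → Set (Fin n → X) := fun g => {x | ∀ i, dist ((g : Cp X).1 (x i)) (f.1 (x i)) < ε}
  have hW : ∀ g, IsOpen (W g) := fun g =>
    isOpen_setOf_forall_dist_lt (fun i => (g : Cp X).2.comp (continuous_apply i))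
      (fun i => f.2.comp (continuous_apply i)) ε
  have hcover : univ ⊆ ⋃ g, W g := by
    intro x _
    have hU : IsOpen {h : Cp X | ∀ i, dist (h.1 (x i)) (f.1 (x i)) < ε} :=
      isOpen_setOf_forall_dist_lt (fun i => (continuous_apply (x i)).comp continuous_subtype_val)
        (fun _ => continuous_const) ε
    obtain ⟨g, hgU, hgA⟩ := _root_.mem_closure_iff.mp hf _ hU fun _ => by simpa using hε
    exact mem_iUnion.2 ⟨⟨g, hgA⟩, hgU⟩
  obtain ⟨C, hCc, hC⟩ := isLindelof_univ.elim_countable_subcover W hW hcover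
  refine ⟨Subtype.val '' C, Subtype.coe_image_subset A C, hCc.image _, fun x => ?_⟩
  obtain ⟨g, hgC, hxg⟩ := mem_iUnion₂.1 (hC (mem_univ x))
  exact ⟨g, mem_image_of_mem _ hgC, hxg⟩

end Cp

theorem cp_countably_tight_of_finite_powers_lindelof_general
    {X : Type*} [TopologicalSpace X]
    (hLin : ∀ n : ℕ, LindelofSpace (Fin n → X)) :
    ∀ (A : Set (Cp X)) (f : Cp X), f ∈ closure A →
      ∃ B ⊆ A, B.Countable ∧ f ∈ closure B := by
  intro A f hf
  choose B hBA hBc hB using fun n k : ℕ =>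
    letI := hLin n
    Cp.exists_countable_approx_on_tuples (n := n) hf (Nat.one_div_pos_of_nat (n := k))
  refine ⟨⋃ n, ⋃ k, B n k, iUnion₂_subset hBA, countable_iUnion fun n => countable_iUnion (hBc n),
    Cp.mem_closure_iff.2 fun I hI k => ?_⟩
  obtain ⟨n, e, rfl⟩ := hI.fin_embedding
  obtain ⟨g, hg, hgf⟩ := hB n k e
  exact ⟨g, mem_iUnion₂_of_mem (i := n) (j := k) hg, forall_mem_range.2 hgf⟩

/-- Arhangel'skii–Pytkeev (one direction): if all finite powers of a Tychonoff space
`X` are Lindelöf, then `C_p(X)` has countable tightness. -/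
theorem cp_countably_tight_of_finite_powers_lindelof
    {X : Type*} [TopologicalSpace X] [T35Space X]
    (hLin : ∀ n : ℕ, LindelofSpace (Fin n → X)) :
    ∀ (A : Set (Cp X)) (f : Cp X), f ∈ closure A →
      ∃ B ⊆ A, B.Countable ∧ f ∈ closure B :=
  cp_countably_tight_of_finite_powers_lindelof_general hLin
end
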